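/- arXiv:1503.07066 — 10 statements merged into one kernel-verified Lean document; each statement's English description precedes it below -/
import Mathlib

section
/- Suppose the marginal Metropolis–Hastings kernel P satisfies a geometric drift condition with drift function V : X → [1,∞), set C ∈ B(X) and constants λ < 1, b < ∞, and that the weights satisfy conditions (W1) and (W2). Then for any ε ∈ (0, (1−λ)/λ) there exists N₀ ∈ ℕ⁺ such that for all N ≥ N₀ the noisy kernel P̃_N satisfies the geometric drift condition P̃_N V(x) ≤ λ(1+ε) V(x) + b(1+ε)·1_C(x) for all x ∈ X, with the same drift function V and set C (so the noisy chain is geometrically ergodic). -/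
open MeasureTheory ProbabilityTheory Filter
open scoped ENNReal

/-- Metropolis--Hastings acceptance probability
`α(x,y) = min {1, π(y)q(y,x) / (π(x)q(x,y))}`. -/
noncomputable def mhAlpha {X : Type*} (pi : X → ℝ) (q : X → X → ℝ) (x y : X) : ℝ :=
  min 1 (pi y * q y x / (pi x * q x y))

/-- Noisy (Monte Carlo within Metropolis) acceptance probability
`α̃_N(x,y) = E[min {1, π(y)q(y,x)W_{y,N} / (π(x)q(x,y)W_{x,N})}]`,
the expectation being over independent weights `W_{x,N} ~ Q_N(x,·)` and `W_{y,N} ~ Q_N(y,·)`. -/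
noncomputable def noisyAlpha {X : Type*} [MeasurableSpace X] (pi : X → ℝ) (q : X → X → ℝ)
    (Q : ℕ → Kernel X ℝ) (N : ℕ) (x y : X) : ℝ :=
  ∫ w, ∫ u, min 1 (pi y * q y x * u / (pi x * q x y * w)) ∂((Q N) y) ∂((Q N) x)

/-- Marginal rejection probability `ρ(x) = 1 - ∫ α(x,y) q(x,y) μ(dy)`. -/
noncomputable def mhRho {X : Type*} [MeasurableSpace X] (μ : Measure X)
    (pi : X → ℝ) (q : X → X → ℝ) (x : X) : ℝ :=
  1 - ∫ y, mhAlpha pi q x y * q x y ∂μ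

/-- Noisy rejection probability `ρ̃_N(x) = 1 - ∫ α̃_N(x,y) q(x,y) μ(dy)`. -/
noncomputable def noisyRho {X : Type*} [MeasurableSpace X] (μ : Measure X)
    (pi : X → ℝ) (q : X → X → ℝ) (Q : ℕ → Kernel X ℝ) (N : ℕ) (x : X) : ℝ :=
  1 - ∫ y, noisyAlpha pi q Q N x y * q x y ∂μ

/-- Action of the marginal MH kernel on a function `V`:
`PV(x) = ∫ α(x,y) V(y) q(x,y) μ(dy) + ρ(x) V(x)`. -/
noncomputable def mhPV {X : Type*} [MeasurableSpace X] (μ : Measure X)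
    (pi : X → ℝ) (q : X → X → ℝ) (V : X → ℝ) (x : X) : ℝ :=
  (∫ y, mhAlpha pi q x y * V y * q x y ∂μ) + mhRho μ pi q x * V x

/-- Action of the noisy kernel on a function `V`:
`P̃_N V(x) = ∫ α̃_N(x,y) V(y) q(x,y) μ(dy) + ρ̃_N(x) V(x)`. -/
noncomputable def noisyPV {X : Type*} [MeasurableSpace X] (μ : Measure X)
    (pi : X → ℝ) (q : X → X → ℝ) (Q : ℕ → Kernel X ℝ) (N : ℕ) (V : X → ℝ) (x : X) : ℝ :=
  (∫ y, noisyAlpha pi q Q N x y * V y * q x y ∂μ) + noisyRho μ pi q Q N x * V x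

/-! Writing `r` for the Metropolis–Hastings ratio and `T = W_y / W_x`, the noisy acceptance
probability is `E[min 1 (r T)]`, and `min 1 r * min 1 T ≤ min 1 (r T) ≤ min 1 r * max 1 T`.
Since `E[T] = E[W_x⁻¹]`, (W2) makes `E[T]` close to `1`, and (W1) makes the deficit
`E[(1 - T)⁺]` small, uniformly in `x, y`; hence `α̃_N ≤ (1 + o(1)) α` and `α̃_N ≥ α - o(1)`.
Substituting both bounds into `P̃_N V(x) = ∫ α̃_N V q + (1 - ∫ α̃_N q) V(x)` gives
`P̃_N V ≤ (1 + o(1)) P V + o(1) V`, and the drift condition for `P` finishes the proof. -/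

open Set

section AcceptanceFunction

variable {Ω : Type*} [MeasurableSpace Ω] {ρ : Measure Ω} [IsProbabilityMeasure ρ] {T : Ω → ℝ}
  {r : ℝ}

lemma min_one_mul_le_min_one_mul_max_one (hr : 0 ≤ r) (t : ℝ) :
    min 1 (r * t) ≤ min 1 r * max 1 t := by
  rcases le_total r 1 with h | h
  · rw [min_eq_right h]
    exact min_le_of_right_le (mul_le_mul_of_nonneg_left (le_max_right 1 t) hr)
  · rw [min_eq_left h, one_mul]
    exact min_le_of_left_le (le_max_left 1 t)

lemma min_one_mul_min_one_le_min_one_mul (hr : 0 ≤ r) {t : ℝ} (ht : 0 ≤ t) :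
    min 1 r * min 1 t ≤ min 1 (r * t) :=
  le_min (mul_le_one₀ (min_le_left _ _) (le_min zero_le_one ht) (min_le_left _ _))
    (mul_le_mul (min_le_right _ _) (min_le_right _ _) (le_min zero_le_one ht) hr)

lemma integral_min_one_mul_le (hT : Integrable T ρ) (hr : 0 ≤ r) :
    ∫ ω, min 1 (r * T ω) ∂ρ ≤ min 1 r * (∫ ω, T ω ∂ρ + ∫ ω, max (1 - T ω) 0 ∂ρ) := by
  have hdef : Integrable (fun ω => max (1 - T ω) 0) ρ := ((integrable_const 1).sub hT).pos_part
  have hmax (t : ℝ) : max 1 t = t + max (1 - t) 0 := by rw [← max_add_add_left]; simp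
  calc ∫ ω, min 1 (r * T ω) ∂ρ ≤ ∫ ω, min 1 r * (T ω + max (1 - T ω) 0) ∂ρ :=
        integral_mono ((integrable_const 1).inf (hT.const_mul r)) ((hT.add hdef).const_mul _)
          fun ω => hmax (T ω) ▸ min_one_mul_le_min_one_mul_max_one hr (T ω)
    _ = _ := by rw [integral_const_mul, integral_add hT hdef]

lemma min_one_mul_one_sub_le_integral_min_one_mul (hT : Integrable T ρ)
    (hT0 : ∀ᵐ ω ∂ρ, 0 ≤ T ω) (hr : 0 ≤ r) :
    min 1 r * (1 - ∫ ω, max (1 - T ω) 0 ∂ρ) ≤ ∫ ω, min 1 (r * T ω) ∂ρ := by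
  have hdef : Integrable (fun ω => max (1 - T ω) 0) ρ := ((integrable_const 1).sub hT).pos_part
  have hmin (t : ℝ) : min 1 t = 1 - max (1 - t) 0 := by
    rw [← min_sub_sub_left]; simp [min_comm]
  calc min 1 r * (1 - ∫ ω, max (1 - T ω) 0 ∂ρ)
        = ∫ ω, min 1 r * (1 - max (1 - T ω) 0) ∂ρ := by
          rw [integral_const_mul, integral_sub (integrable_const 1) hdef]; simp
    _ ≤ _ := integral_mono_ae (((integrable_const 1).sub hdef).const_mul _)
          ((integrable_const 1).inf (hT.const_mul r))
          (hT0.mono fun ω hω => show min 1 r * (1 - max (1 - T ω) 0) ≤ min 1 (r * T ω) by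
            rw [← hmin (T ω)]; exact min_one_mul_min_one_le_min_one_mul hr hω)

end AcceptanceFunction

lemma max_one_sub_div_le {δ w u : ℝ} (hδ : 0 ≤ δ) (hw : 0 < w) (hu : 0 ≤ u) :
    max (1 - u / w) 0 ≤
      2 * δ + {v : ℝ | δ ≤ |v - 1|}.indicator 1 w + {v : ℝ | δ ≤ |v - 1|}.indicator 1 u := by
  set A := {v : ℝ | δ ≤ |v - 1|}
  have hle_one : max (1 - u / w) 0 ≤ 1 := max_le (by linarith [div_nonneg hu hw.le]) zero_le_one
  have hind (v : ℝ) : (0 : ℝ) ≤ A.indicator 1 v := indicator_nonneg (fun _ _ => zero_le_one) v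
  by_cases hwA : w ∈ A
  · have h1 : A.indicator 1 w = (1 : ℝ) := indicator_of_mem hwA 1
    linarith [hind u]
  by_cases huA : u ∈ A
  · have h1 : A.indicator 1 u = (1 : ℝ) := indicator_of_mem huA 1
    linarith [hind w]
  rw [indicator_of_notMem hwA, indicator_of_notMem huA]
  simp only [A, mem_ofPred_eq, not_le, abs_lt] at hwA huA
  have : 1 - 2 * δ ≤ u / w := by
    rw [le_div_iff₀ hw]
    rcases le_total (1 - 2 * δ) 0 with h | h
    · nlinarith
    · nlinarith [mul_le_mul_of_nonneg_left huA.2.le h]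
  exact max_le (by linarith) (by linarith)

lemma integrable_div_prod {ν ν' : Measure ℝ} (hinv : Integrable (fun w : ℝ => w⁻¹) ν)
    (hmean : ∫ u, u ∂ν' = 1) :
    Integrable (fun p : ℝ × ℝ => p.2 / p.1) (ν.prod ν') := by
  have hid : Integrable (fun u : ℝ => u) ν' := by
    by_contra h
    simp [integral_undef h] at hmean
  simpa only [div_eq_inv_mul] using hinv.mul_prod hid

section Weights

variable {ν ν' : Measure ℝ} [IsProbabilityMeasure ν] [IsProbabilityMeasure ν'] {r : ℝ}

lemma integral_max_one_sub_div_prod_le (hν : ∀ᵐ w ∂ν, 0 < w) (hν' : ∀ᵐ u ∂ν', 0 < u)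
    {δ : ℝ} (hδ : 0 ≤ δ) :
    ∫ p, max (1 - p.2 / p.1) 0 ∂(ν.prod ν') ≤
      2 * δ + ν.real {v | δ ≤ |v - 1|} + ν'.real {v | δ ≤ |v - 1|} := by
  set A := {v : ℝ | δ ≤ |v - 1|}
  have hA : MeasurableSet A := measurableSet_le measurable_const (measurable_id.sub_const 1).abs
  have hpos : ∀ᵐ p ∂(ν.prod ν'), 0 < p.1 ∧ 0 < p.2 :=
    (Measure.quasiMeasurePreserving_fst.ae hν).and (Measure.quasiMeasurePreserving_snd.ae hν')
  have hind : Integrable (A.indicator (1 : ℝ → ℝ)) ν := (integrable_const 1).indicator hA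
  have hind' : Integrable (A.indicator (1 : ℝ → ℝ)) ν' := (integrable_const 1).indicator hA
  calc ∫ p, max (1 - p.2 / p.1) 0 ∂(ν.prod ν')
        ≤ ∫ p, 2 * δ + A.indicator 1 p.1 + A.indicator 1 p.2 ∂(ν.prod ν') :=
          integral_mono_of_nonneg (ae_of_all _ fun p => le_max_right _ _)
            (((integrable_const _).add (hind.comp_fst ν')).add (hind'.comp_snd ν))
            (hpos.mono fun p hp => max_one_sub_div_le hδ hp.1 hp.2.le)
    _ = _ := by
          rw [integral_add (f := fun p : ℝ × ℝ => 2 * δ + A.indicator 1 p.1)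
              ((integrable_const _).add (hind.comp_fst ν')) (hind'.comp_snd ν),
            integral_add (integrable_const _) (hind.comp_fst ν'), integral_fun_fst,
            integral_fun_snd, integral_indicator_one hA, integral_indicator_one hA]
          simp

lemma integral_integral_min_one_mul_div_le (hr : 0 ≤ r)
    (hinv : Integrable (fun w : ℝ => w⁻¹) ν) (hmean : ∫ u, u ∂ν' = 1) :
    ∫ w, ∫ u, min 1 (r * (u / w)) ∂ν' ∂ν ≤
      min 1 r * (∫ w, w⁻¹ ∂ν + ∫ p, max (1 - p.2 / p.1) 0 ∂(ν.prod ν')) := by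
  have hT := integrable_div_prod hinv hmean
  have hmeanT : ∫ p : ℝ × ℝ, p.2 / p.1 ∂(ν.prod ν') = ∫ w, w⁻¹ ∂ν := by
    simp only [div_eq_inv_mul]
    rw [integral_prod_mul (fun w : ℝ => w⁻¹) (fun u : ℝ => u), hmean, mul_one]
  rw [← hmeanT, ← integral_prod (fun p : ℝ × ℝ => min 1 (r * (p.2 / p.1)))
    ((integrable_const 1).inf (hT.const_mul r))]
  exact integral_min_one_mul_le hT hr

lemma min_one_mul_one_sub_le_integral_integral_min_one_mul_div (hr : 0 ≤ r)
    (hν : ∀ᵐ w ∂ν, 0 < w) (hν' : ∀ᵐ u ∂ν', 0 < u)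
    (hinv : Integrable (fun w : ℝ => w⁻¹) ν) (hmean : ∫ u, u ∂ν' = 1) :
    min 1 r * (1 - ∫ p, max (1 - p.2 / p.1) 0 ∂(ν.prod ν')) ≤
      ∫ w, ∫ u, min 1 (r * (u / w)) ∂ν' ∂ν := by
  have hT := integrable_div_prod hinv hmean
  have hT0 : ∀ᵐ p ∂(ν.prod ν'), 0 ≤ p.2 / p.1 :=
    (Measure.quasiMeasurePreserving_fst.ae hν).and (Measure.quasiMeasurePreserving_snd.ae hν')
      |>.mono fun p hp => div_nonneg hp.2.le hp.1.le
  rw [← integral_prod (fun p : ℝ × ℝ => min 1 (r * (p.2 / p.1)))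
    ((integrable_const 1).inf (hT.const_mul r))]
  exact min_one_mul_one_sub_le_integral_min_one_mul hT hT0 hr

end Weights

lemma eventually_forall_le_of_tendsto_iSup {ι α : Type*} {l : Filter ι} {f : ι → α → ℝ≥0∞}
    {c d : ℝ≥0∞} (h : Tendsto (fun i => ⨆ a, f i a) l (nhds c)) (hcd : c < d) :
    ∀ᶠ i in l, ∀ a, f i a ≤ d :=
  (h.eventually_lt_const hcd).mono fun i hi a => (le_iSup (f i) a).trans hi.le

lemma integrable_and_integral_le_of_lintegral_le {α : Type*} [MeasurableSpace α] {μ : Measure α}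
    {f : α → ℝ} (hf0 : 0 ≤ᵐ[μ] f) (hf : AEStronglyMeasurable f μ) {c : ℝ} (hc : 0 ≤ c)
    (h : ∫⁻ a, ENNReal.ofReal (f a) ∂μ ≤ ENNReal.ofReal c) :
    Integrable f μ ∧ ∫ a, f a ∂μ ≤ c := by
  refine ⟨⟨hf, (hasFiniteIntegral_iff_ofReal hf0).2 (h.trans_lt ENNReal.ofReal_lt_top)⟩, ?_⟩
  rw [integral_eq_lintegral_of_nonneg_ae hf0 hf]
  exact ENNReal.toReal_le_of_le_ofReal hc h

lemma eventually_forall_weight_bounds {X : Type*} [MeasurableSpace X] (Q : ℕ → Kernel X ℝ)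
    (hpos : ∀ N x, ∀ᵐ w ∂(Q N x), 0 < w)
    (hW1 : ∀ δ : ℝ, 0 < δ →
      Tendsto (fun N : ℕ => ⨆ x, (Q N) x {w : ℝ | δ ≤ |w - 1|}) atTop (nhds 0))
    (hW2 : Tendsto (fun N : ℕ => ⨆ x, ∫⁻ w, ENNReal.ofReal w⁻¹ ∂((Q N) x)) atTop (nhds 1))
    {η : ℝ} (hη : 0 < η) :
    ∀ᶠ N in atTop, ∀ x, Integrable (fun w : ℝ => w⁻¹) (Q N x) ∧
      ∫ w, w⁻¹ ∂(Q N x) ≤ 1 + η ∧ (Q N x).real {w | η ≤ |w - 1|} ≤ η := by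
  have hfar := eventually_forall_le_of_tendsto_iSup (hW1 η hη) (ENNReal.ofReal_pos.2 hη)
  have hinv := eventually_forall_le_of_tendsto_iSup hW2
    (d := ENNReal.ofReal (1 + η)) (ENNReal.one_lt_ofReal.2 (by linarith))
  filter_upwards [hfar, hinv] with N hfarN hinvN x
  have hinv0 : 0 ≤ᵐ[Q N x] fun w : ℝ => w⁻¹ := (hpos N x).mono fun w hw => inv_nonneg.2 hw.le
  obtain ⟨hint, hle⟩ := integrable_and_integral_le_of_lintegral_le hinv0
    measurable_inv.aestronglyMeasurable (by linarith) (hinvN x)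
  exact ⟨hint, hle, ENNReal.toReal_le_of_le_ofReal hη.le (hfarN x)⟩

section MetropolisHastings

variable {X : Type*} {pi : X → ℝ} {q : X → X → ℝ}

lemma mhAlpha_nonneg (hpi : ∀ x, 0 ≤ pi x) (hq : ∀ x y, 0 ≤ q x y) (x y : X) :
    0 ≤ mhAlpha pi q x y :=
  le_min zero_le_one (div_nonneg (mul_nonneg (hpi y) (hq y x)) (mul_nonneg (hpi x) (hq x y)))

lemma mhAlpha_le_one (x y : X) : mhAlpha pi q x y ≤ 1 :=
  min_le_left _ _

variable [MeasurableSpace X]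

lemma measurable_mhAlpha (hpi : Measurable pi) (hq : Measurable (Function.uncurry q)) (x : X) :
    Measurable (mhAlpha pi q x) :=
  measurable_const.min ((hpi.mul (hq.comp (measurable_id.prodMk measurable_const))).div
    (measurable_const.mul (hq.comp (measurable_const.prodMk measurable_id))))

lemma measurable_noisyAlpha (hpi : Measurable pi) (hq : Measurable (Function.uncurry q))
    (Q : ℕ → Kernel X ℝ) [∀ N, IsMarkovKernel (Q N)] (N : ℕ) (x : X) :
    Measurable (noisyAlpha pi q Q N x) := by
  have hf : StronglyMeasurable (fun z : (X × ℝ) × ℝ =>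
      min 1 (pi z.1.1 * q z.1.1 x * z.2 / (pi x * q x z.1.1 * z.1.2))) := by
    have hy : Measurable fun z : (X × ℝ) × ℝ => z.1.1 := measurable_fst.fst
    exact (measurable_const.min
      (((hpi.comp hy).mul (hq.comp (hy.prodMk measurable_const))).mul measurable_snd |>.div
        ((measurable_const.mul (hq.comp (measurable_const.prodMk hy))).mul
          measurable_fst.snd))).stronglyMeasurable
  have hinner : StronglyMeasurable (fun p : X × ℝ =>
      ∫ u, min 1 (pi p.1 * q p.1 x * u / (pi x * q x p.1 * p.2)) ∂(Q N p.1)) := by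
    simpa [Kernel.comap_apply] using
      hf.integral_kernel_prod_right' (κ := (Q N).comap Prod.fst measurable_fst)
  exact (hinner.integral_prod_right' (ν := Q N x)).measurable

lemma noisyAlpha_eq_integral_integral (Q : ℕ → Kernel X ℝ) (N : ℕ) (x y : X) :
    noisyAlpha pi q Q N x y =
      ∫ w, ∫ u, min 1 (pi y * q y x / (pi x * q x y) * (u / w)) ∂(Q N y) ∂(Q N x) := by
  simp only [noisyAlpha, mul_div_mul_comm]

lemma noisyAlpha_le_and_sub_le (hpi : ∀ x, 0 ≤ pi x) (hq : ∀ x y, 0 ≤ q x y)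
    {Q : ℕ → Kernel X ℝ} [∀ N, IsMarkovKernel (Q N)] {N : ℕ} {x y : X} {η₁ η₂ : ℝ}
    (hposx : ∀ᵐ w ∂(Q N x), 0 < w) (hposy : ∀ᵐ u ∂(Q N y), 0 < u)
    (hinv : Integrable (fun w : ℝ => w⁻¹) (Q N x)) (hinv_le : ∫ w, w⁻¹ ∂(Q N x) ≤ 1 + η₁)
    (hmean : ∫ u, u ∂(Q N y) = 1)
    (hdef : ∫ p, max (1 - p.2 / p.1) 0 ∂((Q N x).prod (Q N y)) ≤ η₂) :
    noisyAlpha pi q Q N x y ≤ (1 + (η₁ + η₂)) * mhAlpha pi q x y ∧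
      mhAlpha pi q x y - η₂ ≤ noisyAlpha pi q Q N x y := by
  set r := pi y * q y x / (pi x * q x y)
  have hr : 0 ≤ r := div_nonneg (mul_nonneg (hpi y) (hq y x)) (mul_nonneg (hpi x) (hq x y))
  have hα : mhAlpha pi q x y = min 1 r := rfl
  have hα0 : 0 ≤ min 1 r := hα ▸ mhAlpha_nonneg hpi hq x y
  have hdef0 : 0 ≤ ∫ p, max (1 - p.2 / p.1) 0 ∂((Q N x).prod (Q N y)) :=
    integral_nonneg fun p => le_max_right _ _
  rw [noisyAlpha_eq_integral_integral, hα]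
  constructor
  · calc _ ≤ min 1 r * (∫ w, w⁻¹ ∂(Q N x) +
            ∫ p, max (1 - p.2 / p.1) 0 ∂((Q N x).prod (Q N y))) :=
          integral_integral_min_one_mul_div_le hr hinv hmean
      _ ≤ min 1 r * (1 + (η₁ + η₂)) := mul_le_mul_of_nonneg_left (by linarith) hα0
      _ = _ := mul_comm _ _
  · calc min 1 r - η₂
        ≤ min 1 r * (1 - ∫ p, max (1 - p.2 / p.1) 0 ∂((Q N x).prod (Q N y))) := by
          nlinarith [min_le_left 1 r]
      _ ≤ _ := min_one_mul_one_sub_le_integral_integral_min_one_mul_div hr hposx hposy hinv hmean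

end MetropolisHastings

section AcceptReject

variable {X : Type*} [MeasurableSpace X] {μ : Measure X} {k a a' V : X → ℝ} {v E E' : ℝ}

/-- `KV(x)` for the accept/reject kernel `K` with proposal density `k = q(x, ·)` and acceptance
probability `a = α(x, ·)`, where `v = V(x)`; both `mhPV` and `noisyPV` are of this form. -/
noncomputable def acceptRejectDrift (μ : Measure X) (k a V : X → ℝ) (v : ℝ) : ℝ :=
  (∫ y, a y * V y * k y ∂μ) + (1 - ∫ y, a y * k y ∂μ) * v

lemma acceptRejectDrift_le (hk0 : ∀ y, 0 ≤ k y) (hk : Integrable k μ) (hk1 : ∫ y, k y ∂μ = 1)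
    (hV0 : ∀ y, 0 ≤ V y) (hVk : Integrable (fun y => V y * k y) μ) (hv : 0 ≤ v) (hE : 0 ≤ E)
    (ha : AEStronglyMeasurable a μ) (ha0 : ∀ y, 0 ≤ a y) (ha1 : ∀ y, a y ≤ 1)
    (ha' : AEStronglyMeasurable a' μ)
    (hup : ∀ y, a' y ≤ (1 + E) * a y) (hlow : ∀ y, a y - E' ≤ a' y) :
    acceptRejectDrift μ k a' V v ≤ (1 + E) * acceptRejectDrift μ k a V v + E' * v := by
  have hnorm_a (y : X) : ‖a y‖ ≤ 1 := by
    rw [Real.norm_of_nonneg (ha0 y)]; exact ha1 y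
  have hnorm_a' (y : X) : ‖a' y‖ ≤ 1 + E + |E'| := by
    have := (hup y).trans (mul_le_of_le_one_right (by linarith) (ha1 y))
    rw [Real.norm_eq_abs, abs_le]
    constructor <;> linarith [hlow y, ha0 y, le_abs_self E', abs_nonneg E']
  have hak := hk.bdd_mul ha (ae_of_all _ hnorm_a)
  have ha'k := hk.bdd_mul ha' (ae_of_all _ hnorm_a')
  have haVk : Integrable (fun y => a y * V y * k y) μ := by
    simpa only [mul_assoc] using hVk.bdd_mul ha (ae_of_all _ hnorm_a)
  have ha'Vk : Integrable (fun y => a' y * V y * k y) μ := by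
    simpa only [mul_assoc] using hVk.bdd_mul ha' (ae_of_all _ hnorm_a')
  have haccept : ∫ y, a' y * V y * k y ∂μ ≤ (1 + E) * ∫ y, a y * V y * k y ∂μ := by
    rw [← integral_const_mul]
    refine integral_mono ha'Vk (haVk.const_mul _) fun y => ?_
    have := mul_le_mul_of_nonneg_right (hup y) (mul_nonneg (hV0 y) (hk0 y))
    simp only [mul_assoc] at this ⊢
    exact this
  have hreject : ∫ y, a y * k y ∂μ - E' ≤ ∫ y, a' y * k y ∂μ := by
    calc ∫ y, a y * k y ∂μ - E' = ∫ y, a y * k y - E' * k y ∂μ := by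
          rw [integral_sub hak (hk.const_mul E'), integral_const_mul, hk1, mul_one]
      _ ≤ _ := integral_mono (hak.sub (hk.const_mul E')) ha'k fun y => by
          rw [← sub_mul]; exact mul_le_mul_of_nonneg_right (hlow y) (hk0 y)
  have haccept_le_one : ∫ y, a y * k y ∂μ ≤ 1 :=
    hk1 ▸ integral_mono hak hk fun y => mul_le_of_le_one_left (hk0 y) (ha1 y)
  unfold acceptRejectDrift
  nlinarith only [haccept, hreject, hv,
    mul_nonneg hE (mul_nonneg (sub_nonneg.2 haccept_le_one) hv)]

end AcceptReject

theorem noisy_inherits_geometric_drift_general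
    {X : Type*} [MeasurableSpace X] (μ : Measure X)
    (pi : X → ℝ) (q : X → X → ℝ)
    (hpi_pos : ∀ x, 0 < pi x) (hpi_meas : Measurable pi)
    (hq_meas : Measurable (Function.uncurry q)) (hq_nonneg : ∀ x y, 0 ≤ q x y)
    (hq_int : ∀ x, Integrable (fun y => q x y) μ)
    (hq_one : ∀ x, ∫ y, q x y ∂μ = 1)
    -- the weight distributions: probability kernels on (0,∞) with mean one
    (Q : ℕ → Kernel X ℝ) [∀ N, IsMarkovKernel (Q N)]
    (hQ_pos : ∀ N x, (Q N) x {w : ℝ | w ≤ 0} = 0)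
    (hQ_mean : ∀ N x, ∫ w, w ∂((Q N) x) = 1)
    -- (P1): geometric drift condition for the marginal chain
    (V : X → ℝ) (hV_one : ∀ x, 1 ≤ V x)
    (hVq_int : ∀ x, Integrable (fun y => V y * q x y) μ)
    (lam b : ℝ) (hlam : lam < 1) (hb : 0 ≤ b)
    (C : Set X)
    (hdrift : ∀ x, mhPV μ pi q V x ≤ lam * V x + b * Set.indicator C (fun _ => (1 : ℝ)) x)
    -- (W1)
    (hW1 : ∀ δ : ℝ, 0 < δ →
      Tendsto (fun N : ℕ => ⨆ x, (Q N) x {w : ℝ | δ ≤ |w - 1|}) atTop (nhds 0))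
    -- (W2)
    (hW2 : Tendsto (fun N : ℕ => ⨆ x, ∫⁻ w, ENNReal.ofReal w⁻¹ ∂((Q N) x))
      atTop (nhds 1)) :
    ∀ ε : ℝ, 0 < ε → ε < (1 - lam) / lam →
      ∃ N₀ : ℕ, 0 < N₀ ∧ ∀ N, N₀ ≤ N → ∀ x,
        noisyPV μ pi q Q N V x
          ≤ lam * (1 + ε) * V x + b * (1 + ε) * Set.indicator C (fun _ => (1 : ℝ)) x := by
  intro ε hε hεlt
  have hlam0 : 0 < lam := by
    by_contra! h
    linarith [div_nonpos_of_nonneg_of_nonpos (by linarith : 0 ≤ 1 - lam) h]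
  have hpos (N : ℕ) (x : X) : ∀ᵐ w ∂(Q N x), (0 : ℝ) < w :=
    ae_iff.2 (by simpa only [not_lt] using hQ_pos N x)
  have hV0 (y : X) : 0 ≤ V y := zero_le_one.trans (hV_one y)
  -- chosen so that `(1 + 5η) λ + 4η ≤ (1 + ε) λ` and `5η ≤ ε`
  set η := lam * ε / 9 with hη_def
  have hη : 0 < η := by positivity
  have hlamε : lam * ε = 9 * η := by rw [hη_def]; ring
  obtain ⟨N₀, hN₀⟩ := eventually_atTop.1 (eventually_forall_weight_bounds Q hpos hW1 hW2 hη)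
  refine ⟨N₀ + 1, N₀.succ_pos, fun N hN x => ?_⟩
  have hweights := hN₀ N (by omega)
  have hα (y : X) := noisyAlpha_le_and_sub_le (fun z => (hpi_pos z).le) hq_nonneg
    (hpos N x) (hpos N y) (hweights x).1 (hweights x).2.1 (hQ_mean N y)
    ((integral_max_one_sub_div_prod_le (hpos N x) (hpos N y) hη.le).trans
      (by linarith [(hweights x).2.2, (hweights y).2.2] : _ ≤ 4 * η))
  have hI : 0 ≤ Set.indicator C (fun _ => (1 : ℝ)) x :=
    Set.indicator_nonneg (fun _ _ => zero_le_one) x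
  have hcoefV : (1 + (η + 4 * η)) * lam + 4 * η ≤ lam * (1 + ε) := by
    linarith [mul_le_of_le_one_right hη.le hlam.le]
  have hcoefb : 1 + (η + 4 * η) ≤ 1 + ε := by
    linarith [mul_le_of_le_one_left hε.le hlam.le]
  calc noisyPV μ pi q Q N V x ≤ (1 + (η + 4 * η)) * mhPV μ pi q V x + 4 * η * V x :=
        acceptRejectDrift_le (hq_nonneg x) (hq_int x) (hq_one x) hV0 (hVq_int x) (hV0 x)
          (by positivity) (measurable_mhAlpha hpi_meas hq_meas x).aestronglyMeasurable
          (mhAlpha_nonneg (fun z => (hpi_pos z).le) hq_nonneg x) (mhAlpha_le_one x)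
          (measurable_noisyAlpha hpi_meas hq_meas Q N x).aestronglyMeasurable
          (fun y => (hα y).1) (fun y => (hα y).2)
    _ ≤ (1 + (η + 4 * η)) * (lam * V x + b * Set.indicator C (fun _ => (1 : ℝ)) x)
          + 4 * η * V x := by gcongr; exact hdrift x
    _ ≤ _ := by
          linarith [mul_le_mul_of_nonneg_right hcoefV (hV0 x),
            mul_le_mul_of_nonneg_left hcoefb (mul_nonneg hb hI)]

/-- If the marginal Metropolis--Hastings kernel satisfies a geometric drift
condition with drift function `V ≥ 1`, set `C` and constants `λ < 1`, `b < ∞`, and the weights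
satisfy (W1) and (W2), then for any `ε ∈ (0, (1-λ)/λ)` there is `N₀` such that for all `N ≥ N₀`
the noisy kernel satisfies the drift condition
`P̃_N V(x) ≤ λ(1+ε) V(x) + b(1+ε) 1_C(x)` with the same `V` and `C`. -/
theorem noisy_inherits_geometric_drift
    {X : Type*} [MeasurableSpace X] (μ : Measure X)
    (pi : X → ℝ) (q : X → X → ℝ)
    (hpi_pos : ∀ x, 0 < pi x) (hpi_meas : Measurable pi)
    (hq_meas : Measurable (Function.uncurry q)) (hq_nonneg : ∀ x y, 0 ≤ q x y)
    (hq_int : ∀ x, Integrable (fun y => q x y) μ)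
    (hq_one : ∀ x, ∫ y, q x y ∂μ = 1)
    -- the weight distributions: probability kernels on (0,∞) with mean one
    (Q : ℕ → Kernel X ℝ) [∀ N, IsMarkovKernel (Q N)]
    (hQ_pos : ∀ N x, (Q N) x {w : ℝ | w ≤ 0} = 0)
    (hQ_mean : ∀ N x, ∫ w, w ∂((Q N) x) = 1)
    -- (P1): geometric drift condition for the marginal chain
    (V : X → ℝ) (hV_one : ∀ x, 1 ≤ V x) (hV_meas : Measurable V)
    (hVq_int : ∀ x, Integrable (fun y => V y * q x y) μ)
    (lam b : ℝ) (hlam : lam < 1) (hb : 0 ≤ b)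
    (C : Set X) (hC : MeasurableSet C)
    (hdrift : ∀ x, mhPV μ pi q V x ≤ lam * V x + b * Set.indicator C (fun _ => (1 : ℝ)) x)
    -- (W1)
    (hW1 : ∀ δ : ℝ, 0 < δ →
      Tendsto (fun N : ℕ => ⨆ x, (Q N) x {w : ℝ | δ ≤ |w - 1|}) atTop (nhds 0))
    -- (W2)
    (hW2 : Tendsto (fun N : ℕ => ⨆ x, ∫⁻ w, ENNReal.ofReal w⁻¹ ∂((Q N) x))
      atTop (nhds 1)) :
    ∀ ε : ℝ, 0 < ε → ε < (1 - lam) / lam →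
      ∃ N₀ : ℕ, 0 < N₀ ∧ ∀ N, N₀ ≤ N → ∀ x,
        noisyPV μ pi q Q N V x
          ≤ lam * (1 + ε) * V x + b * (1 + ε) * Set.indicator C (fun _ => (1 : ℝ)) x :=
  noisy_inherits_geometric_drift_general μ pi q hpi_pos hpi_meas hq_meas hq_nonneg hq_int hq_one Q
    hQ_pos hQ_mean V hV_one hVq_int lam b hlam hb C hdrift hW1 hW2
end

section
/- For all x, y ∈ X and all N ∈ ℕ⁺, the noisy acceptance probability satisfies α̃_N(x,y) ≤ α(x,y) · E[W_{x,N}^{-1}]. -/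
open MeasureTheory ProbabilityTheory Filter
open scoped ENNReal

/-!
Write `r = π(y)q(y,x) / (π(x)q(x,y))`, so that the integrand is `min 1 (r * (U / W))`.
If `r ≤ 1`, then `α = r`, and dropping the `min` gives `r * E[U] * E[W⁻¹] = r * E[W⁻¹]`.
If `r ≥ 1`, then `α = 1` and the integrand is at most `1 ≤ E[W⁻¹]`, the last step by
integrating `w + w⁻¹ ≥ 2` against the law of `W`, whose mean is `1`.
Working in `ℝ≥0∞` lets `E[W⁻¹]` be infinite and removes all integrability side conditions.
-/

namespace NoisyAcceptance

lemma ofReal_integral_le_lintegral_ofReal {α : Type*} [MeasurableSpace α] {μ : Measure α}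
    (f : α → ℝ) : ENNReal.ofReal (∫ a, f a ∂μ) ≤ ∫⁻ a, ENNReal.ofReal (f a) ∂μ := by
  by_cases hf : Integrable f μ
  · rw [integral_eq_lintegral_pos_part_sub_lintegral_neg_part hf]
    exact (ENNReal.ofReal_le_ofReal (sub_le_self _ ENNReal.toReal_nonneg)).trans
      ENNReal.ofReal_toReal_le
  · simp [integral_undef hf]

lemma lintegral_ofReal_eq_one {α : Type*} [MeasurableSpace α] {μ : Measure α} {f : α → ℝ}
    (hf : 0 ≤ᵐ[μ] f) (h_one : ∫ a, f a ∂μ = 1) : ∫⁻ a, ENNReal.ofReal (f a) ∂μ = 1 := by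
  have hf_int : Integrable f μ := Integrable.of_integral_ne_zero (by simp [h_one])
  rw [← ofReal_integral_eq_lintegral_ofReal hf_int hf, h_one, ENNReal.ofReal_one]

lemma two_le_add_inv_self {w : ℝ} (hw : 0 < w) : 2 ≤ w + w⁻¹ := by
  nlinarith [sq_nonneg (w - 1), mul_inv_cancel₀ hw.ne', inv_pos.2 hw]

lemma one_le_lintegral_ofReal_inv {μ : Measure ℝ} [IsProbabilityMeasure μ]
    (h_pos : ∀ᵐ w ∂μ, 0 < w) (h_mean : ∫ w, w ∂μ = 1) :
    1 ≤ ∫⁻ w, ENNReal.ofReal w⁻¹ ∂μ := by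
  have h_two : ∫⁻ _, (2 : ℝ≥0∞) ∂μ ≤ ∫⁻ w, (ENNReal.ofReal w + ENNReal.ofReal w⁻¹) ∂μ := by
    refine lintegral_mono_ae (h_pos.mono fun w hw => ?_)
    rw [← ENNReal.ofReal_add hw.le (inv_pos.2 hw).le, ← ENNReal.ofReal_ofNat]
    exact ENNReal.ofReal_le_ofReal (two_le_add_inv_self hw)
  rw [lintegral_add_left (by fun_prop),
    lintegral_ofReal_eq_one (h_pos.mono fun _ hw => hw.le) h_mean, lintegral_const,
    measure_univ, mul_one, ← one_add_one_eq_two] at h_two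
  exact (ENNReal.add_le_add_iff_left ENNReal.one_ne_top).1 h_two

variable {μ ν : Measure ℝ}

lemma lintegral_lintegral_ofReal_min_one_le_of_one_le [IsProbabilityMeasure μ]
    [IsProbabilityMeasure ν] (h_pos : ∀ᵐ w ∂μ, 0 < w) (h_mean : ∫ w, w ∂μ = 1) (r : ℝ) :
    ∫⁻ w, ∫⁻ u, ENNReal.ofReal (min 1 (r * (u / w))) ∂ν ∂μ
      ≤ ∫⁻ w, ENNReal.ofReal w⁻¹ ∂μ :=
  calc ∫⁻ w, ∫⁻ u, ENNReal.ofReal (min 1 (r * (u / w))) ∂ν ∂μ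
      ≤ ∫⁻ _, ∫⁻ _, 1 ∂ν ∂μ :=
        lintegral_mono fun _ => lintegral_mono fun _ => ENNReal.ofReal_le_one.2 (min_le_left _ _)
    _ = 1 := by simp
    _ ≤ ∫⁻ w, ENNReal.ofReal w⁻¹ ∂μ := one_le_lintegral_ofReal_inv h_pos h_mean

lemma lintegral_lintegral_ofReal_min_one_le_of_le_one (hμ_nonneg : ∀ᵐ w ∂μ, 0 ≤ w)
    (hν_nonneg : ∀ᵐ u ∂ν, 0 ≤ u) (hν_mean : ∫ u, u ∂ν = 1) (r : ℝ) :
    ∫⁻ w, ∫⁻ u, ENNReal.ofReal (min 1 (r * (u / w))) ∂ν ∂μ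
      ≤ ENNReal.ofReal r * ∫⁻ w, ENNReal.ofReal w⁻¹ ∂μ := by
  rw [← lintegral_const_mul' _ _ ENNReal.ofReal_ne_top]
  refine lintegral_mono_ae (hμ_nonneg.mono fun w hw => ?_)
  calc ∫⁻ u, ENNReal.ofReal (min 1 (r * (u / w))) ∂ν
      ≤ ∫⁻ u, ENNReal.ofReal (r * w⁻¹) * ENNReal.ofReal u ∂ν := by
        refine lintegral_mono_ae (hν_nonneg.mono fun u hu => ?_)
        rw [← ENNReal.ofReal_mul' hu, mul_div_assoc', div_eq_mul_inv, mul_right_comm]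
        exact ENNReal.ofReal_le_ofReal (min_le_right _ _)
    _ = ENNReal.ofReal r * ENNReal.ofReal w⁻¹ := by
        rw [lintegral_const_mul' _ _ ENNReal.ofReal_ne_top,
          lintegral_ofReal_eq_one hν_nonneg hν_mean, mul_one,
          ENNReal.ofReal_mul' (inv_nonneg.2 hw)]

theorem ofReal_integral_integral_min_one_le [IsProbabilityMeasure μ] [IsProbabilityMeasure ν]
    (hμ_pos : ∀ᵐ w ∂μ, 0 < w) (hν_pos : ∀ᵐ u ∂ν, 0 < u)
    (hμ_mean : ∫ w, w ∂μ = 1) (hν_mean : ∫ u, u ∂ν = 1) (r : ℝ) :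
    ENNReal.ofReal (∫ w, ∫ u, min 1 (r * (u / w)) ∂ν ∂μ)
      ≤ ENNReal.ofReal (min 1 r) * ∫⁻ w, ENNReal.ofReal w⁻¹ ∂μ := by
  calc ENNReal.ofReal (∫ w, ∫ u, min 1 (r * (u / w)) ∂ν ∂μ)
      ≤ ∫⁻ w, ∫⁻ u, ENNReal.ofReal (min 1 (r * (u / w))) ∂ν ∂μ :=
        (ofReal_integral_le_lintegral_ofReal _).trans
          (lintegral_mono fun _ => ofReal_integral_le_lintegral_ofReal _)
    _ ≤ ENNReal.ofReal (min 1 r) * ∫⁻ w, ENNReal.ofReal w⁻¹ ∂μ := by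
      rcases le_total 1 r with hr | hr
      · rw [min_eq_left hr, ENNReal.ofReal_one, one_mul]
        exact lintegral_lintegral_ofReal_min_one_le_of_one_le hμ_pos hμ_mean r
      · rw [min_eq_right hr]
        exact lintegral_lintegral_ofReal_min_one_le_of_le_one
          (hμ_pos.mono fun _ hw => hw.le) (hν_pos.mono fun _ hu => hu.le) hν_mean r

end NoisyAcceptance

theorem noisy_acceptance_ratio_bound_general
    {X : Type*} [MeasurableSpace X]
    (pi : X → ℝ) (q : X → X → ℝ)
    (Q : ℕ → Kernel X ℝ) [∀ N, IsMarkovKernel (Q N)]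
    (hQ_pos : ∀ N x, (Q N) x {w : ℝ | w ≤ 0} = 0)
    (hQ_mean : ∀ N x, ∫ w, w ∂((Q N) x) = 1)
    (N : ℕ) (x y : X) :
    ENNReal.ofReal (noisyAlpha pi q Q N x y)
      ≤ ENNReal.ofReal (mhAlpha pi q x y) * ∫⁻ w, ENNReal.ofReal w⁻¹ ∂((Q N) x) := by
  have h_pos : ∀ z, ∀ᵐ w ∂((Q N) z), 0 < w := fun z =>
    ae_iff.2 (by simpa only [not_lt] using hQ_pos N z)
  simpa only [noisyAlpha, mhAlpha, mul_div_mul_comm] using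
    NoisyAcceptance.ofReal_integral_integral_min_one_le (h_pos x) (h_pos y)
      (hQ_mean N x) (hQ_mean N y) (pi y * q y x / (pi x * q x y))

/-- For all `x, y` and all `N`, the noisy acceptance probability satisfies
`α̃_N(x,y) ≤ α(x,y) · E[W_{x,N}⁻¹]`. -/
theorem noisy_acceptance_ratio_bound
    {X : Type*} [MeasurableSpace X]
    (pi : X → ℝ) (q : X → X → ℝ)
    (hpi_pos : ∀ x, 0 < pi x) (hpi_meas : Measurable pi)
    (hq_meas : Measurable (Function.uncurry q)) (hq_nonneg : ∀ x y, 0 ≤ q x y)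
    (Q : ℕ → Kernel X ℝ) [∀ N, IsMarkovKernel (Q N)]
    (hQ_pos : ∀ N x, (Q N) x {w : ℝ | w ≤ 0} = 0)
    (hQ_mean : ∀ N x, ∫ w, w ∂((Q N) x) = 1)
    (N : ℕ) (x y : X) :
    ENNReal.ofReal (noisyAlpha pi q Q N x y)
      ≤ ENNReal.ofReal (mhAlpha pi q x y) * ∫⁻ w, ENNReal.ofReal w⁻¹ ∂((Q N) x) :=
  noisy_acceptance_ratio_bound_general pi q Q hQ_pos hQ_mean N x y
end

section
/- For every η > 0 and all x, y ∈ X, the acceptance probabilities satisfy α̃_N(x,y) − α(x,y) ≤ η + 2 sup_{x'∈X} P[|W_{x',N} − 1| ≥ η/(2(1+η))]. -/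
/-! Write `δ = η / (2(1 + η))` and let `r` be the Metropolis–Hastings ratio. If both weights lie
within `δ` of `1`, their ratio is at most `(1 + δ)/(1 - δ) ≤ 1 + η`, so the noisy integrand
`min 1 (r W_y / W_x)` exceeds `min 1 r` by at most `η`. Otherwise the integrand is still at most
`1`, and by the union bound this happens with probability at most
`P[|W_x - 1| ≥ δ] + P[|W_y - 1| ≥ δ]`. -/

open MeasureTheory ProbabilityTheory Filter
open scoped ENNReal

lemma min_one_mul_le_min_one_add {r s η : ℝ} (hr : 0 ≤ r) (hη : 0 ≤ η) (hs : s ≤ 1 + η) :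
    min 1 (r * s) ≤ min 1 r + η := by
  have hrs : r * s ≤ r * (1 + η) := mul_le_mul_of_nonneg_left hs hr
  rcases le_or_gt 1 r with h | h
  · linarith [min_le_left 1 (r * s), min_eq_left h]
  · rw [min_eq_right h.le]
    nlinarith [min_le_right 1 (r * s)]

lemma div_le_one_add_of_abs_sub_one_lt {u w η : ℝ} (hη : 0 < η)
    (hw : |w - 1| < η / (2 * (1 + η))) (hu : |u - 1| < η / (2 * (1 + η))) :
    u / w ≤ 1 + η := by
  set δ := η / (2 * (1 + η))
  have hδη : 2 * (1 + η) * δ = η := by simp only [δ]; field_simp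
  have hδ : 0 < δ := by positivity
  rw [abs_lt] at hw hu
  rw [div_le_iff₀ (by nlinarith)]
  nlinarith

lemma integral_le_add_measureReal_of_le_compl {Ω : Type*} [MeasurableSpace Ω] {P : Measure Ω}
    [IsProbabilityMeasure P] {f : Ω → ℝ} {T : Set Ω} {a : ℝ} (hf : Integrable f P)
    (hT : MeasurableSet T) (ha : 0 ≤ a) (hf_le_one : ∀ p, f p ≤ 1) (hf_le : ∀ p ∉ T, f p ≤ a) :
    ∫ p, f p ∂P ≤ a + P.real T := by
  have hg : Integrable (fun p => a + T.indicator (fun _ => (1 : ℝ)) p) P :=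
    (integrable_const a).add ((integrable_const 1).indicator hT)
  calc ∫ p, f p ∂P ≤ ∫ p, (a + T.indicator (fun _ => (1 : ℝ)) p) ∂P := by
        refine integral_mono hf hg fun p => ?_
        by_cases hp : p ∈ T
        · rw [Set.indicator_of_mem hp]
          linarith [hf_le_one p]
        · simpa [Set.indicator_of_notMem hp] using hf_le p hp
    _ = a + P.real T := by
        rw [integral_add (integrable_const a) ((integrable_const 1).indicator hT),
          integral_indicator_const _ hT]
        simp

lemma ae_pos_of_measure_nonpos_eq_zero {μ : Measure ℝ} (h : μ {w : ℝ | w ≤ 0} = 0) :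
    ∀ᵐ w ∂μ, 0 < w := by
  rw [ae_iff]
  simpa only [not_lt] using h

lemma integral_integral_min_one_mul_div_le_s5 {μ ν : Measure ℝ} [IsProbabilityMeasure μ]
    [IsProbabilityMeasure ν] (hμ : μ {w : ℝ | w ≤ 0} = 0) (hν : ν {u : ℝ | u ≤ 0} = 0)
    {r η : ℝ} (hr : 0 ≤ r) (hη : 0 < η) :
    ∫ w, ∫ u, min 1 (r * (u / w)) ∂ν ∂μ
      ≤ min 1 r + η + μ.real {w : ℝ | η / (2 * (1 + η)) ≤ |w - 1|}
        + ν.real {u : ℝ | η / (2 * (1 + η)) ≤ |u - 1|} := by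
  set S := {w : ℝ | η / (2 * (1 + η)) ≤ |w - 1|}
  have hS : MeasurableSet S := measurableSet_le measurable_const (by fun_prop)
  have hmeas : Measurable fun p : ℝ × ℝ => min 1 (r * (p.2 / p.1)) := by fun_prop
  have hpos : ∀ᵐ p ∂μ.prod ν, 0 < p.1 ∧ 0 < p.2 :=
    (Measure.quasiMeasurePreserving_fst.ae (ae_pos_of_measure_nonpos_eq_zero hμ)).and
      (Measure.quasiMeasurePreserving_snd.ae (ae_pos_of_measure_nonpos_eq_zero hν))
  have hint : Integrable (fun p : ℝ × ℝ => min 1 (r * (p.2 / p.1))) (μ.prod ν) := by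
    refine .of_bound hmeas.aestronglyMeasurable 1 ?_
    filter_upwards [hpos] with p ⟨hp₁, hp₂⟩
    rw [Real.norm_of_nonneg (le_min zero_le_one (by positivity))]
    exact min_le_left _ _
  rw [integral_integral hint]
  calc ∫ p, min 1 (r * (p.2 / p.1)) ∂μ.prod ν
      ≤ min 1 r + η + (μ.prod ν).real (S ×ˢ Set.univ ∪ Set.univ ×ˢ S) := by
        refine integral_le_add_measureReal_of_le_compl hint
          ((hS.prod .univ).union (MeasurableSet.univ.prod hS)) (by positivity)
          (fun p => min_le_left _ _) fun p hp => ?_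
        simp only [S, Set.mem_union, Set.mem_prod, Set.mem_univ, and_true, true_and, not_or,
          Set.mem_ofPred_eq, not_le] at hp
        exact min_one_mul_le_min_one_add hr hη.le
          (div_le_one_add_of_abs_sub_one_lt hη hp.1 hp.2)
    _ ≤ min 1 r + η + (μ.real S + ν.real S) := by
        gcongr
        refine (measureReal_union_le _ _).trans ?_
        simp
    _ = _ := by ring

lemma ProbabilityTheory.Kernel.toReal_apply_le_iSup {α β : Type*} [MeasurableSpace α]
    [MeasurableSpace β] (κ : Kernel α β) [IsMarkovKernel κ] (s : Set β) (a : α) :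
    (κ a s).toReal ≤ ⨆ a', (κ a' s).toReal :=
  le_ciSup (f := fun a' => (κ a' s).toReal) ⟨1, by
    rintro _ ⟨a', rfl⟩
    exact ENNReal.toReal_le_of_le_ofReal zero_le_one (by simpa using prob_le_one)⟩ a

theorem noisy_acceptance_additive_bound_general
    {X : Type*} [MeasurableSpace X]
    (pi : X → ℝ) (q : X → X → ℝ)
    (hpi_pos : ∀ x, 0 < pi x)
    (hq_nonneg : ∀ x y, 0 ≤ q x y)
    (Q : ℕ → Kernel X ℝ) [∀ N, IsMarkovKernel (Q N)]
    (hQ_pos : ∀ N x, (Q N) x {w : ℝ | w ≤ 0} = 0)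
    (N : ℕ) (x y : X) (η : ℝ) (hη : 0 < η) :
    noisyAlpha pi q Q N x y - mhAlpha pi q x y
      ≤ η + 2 * ⨆ x', (((Q N) x') {w : ℝ | η / (2 * (1 + η)) ≤ |w - 1|}).toReal := by
  have hr : 0 ≤ pi y * q y x / (pi x * q x y) :=
    div_nonneg (mul_nonneg (hpi_pos y).le (hq_nonneg y x))
      (mul_nonneg (hpi_pos x).le (hq_nonneg x y))
  have hnoisy := integral_integral_min_one_mul_div_le_s5 (hQ_pos N x) (hQ_pos N y) hr hη
  simp_rw [← mul_div_mul_comm] at hnoisy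
  simp only [measureReal_def] at hnoisy
  unfold noisyAlpha mhAlpha
  linarith [(Q N).toReal_apply_le_iSup {w : ℝ | η / (2 * (1 + η)) ≤ |w - 1|} x,
    (Q N).toReal_apply_le_iSup {w : ℝ | η / (2 * (1 + η)) ≤ |w - 1|} y]

/-- For every `η > 0` and all `x, y`, the acceptance probabilities satisfy
`α̃_N(x,y) - α(x,y) ≤ η + 2 sup_{x'} P[|W_{x',N} - 1| ≥ η/(2(1+η))]`. -/
theorem noisy_acceptance_additive_bound
    {X : Type*} [MeasurableSpace X]
    (pi : X → ℝ) (q : X → X → ℝ)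
    (hpi_pos : ∀ x, 0 < pi x) (hpi_meas : Measurable pi)
    (hq_meas : Measurable (Function.uncurry q)) (hq_nonneg : ∀ x y, 0 ≤ q x y)
    (Q : ℕ → Kernel X ℝ) [∀ N, IsMarkovKernel (Q N)]
    (hQ_pos : ∀ N x, (Q N) x {w : ℝ | w ≤ 0} = 0)
    (hQ_mean : ∀ N x, ∫ w, w ∂((Q N) x) = 1)
    (N : ℕ) (x y : X) (η : ℝ) (hη : 0 < η) :
    noisyAlpha pi q Q N x y - mhAlpha pi q x y
      ≤ η + 2 * ⨆ x', (((Q N) x') {w : ℝ | η / (2 * (1 + η)) ≤ |w - 1|}).toReal :=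
  noisy_acceptance_additive_bound_general pi q hpi_pos hq_nonneg Q hQ_pos N x y η hη
end

section
/- Let π : ℝ^d → (0,∞) be a probability density that is log-Lipschitz with constant L > 0, i.e. |log π(z) − log π(x)| ≤ L‖z−x‖ for all x, z ∈ ℝ^d, and let q : [0,∞) → [0,∞) define a random walk proposal density q(‖z−x‖) such that K := ∫_{ℝ^d} exp(a‖u‖) q(‖u‖) du < ∞ for some a > 0. Then for any s with 0 < s < min{1, a/L}, the function V = π^{−s} satisfies ∫_{ℝ^d} V(z) q(‖z−x‖) dz ≤ K V(x) for every x ∈ ℝ^d. -/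
open MeasureTheory

/-! A log-Lipschitz density changes by at most a factor `exp (L ‖z - x‖)` between `x` and `z`,
so `π z ^ (-s) ≤ π x ^ (-s) * exp (s L ‖z - x‖) ≤ π x ^ (-s) * exp (a ‖z - x‖)` once `s L ≤ a`.
Integrating this pointwise bound against `q ‖z - x‖` and translating `z ↦ z - x` (Lebesgue measure
is translation invariant) gives `K π x ^ (-s)`. -/

theorem Real.rpow_neg_le_mul_exp_of_log_sub_le {u v c s : ℝ} (hu : 0 < u) (hv : 0 < v)
    (hs : 0 ≤ s) (h : Real.log v - Real.log u ≤ c) :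
    u ^ (-s) ≤ v ^ (-s) * Real.exp (s * c) := by
  rw [Real.rpow_def_of_pos hu, Real.rpow_def_of_pos hv, ← Real.exp_add, Real.exp_le_exp]
  nlinarith

theorem rpow_neg_le_mul_exp_of_abs_log_sub_le {E : Type*} [SeminormedAddGroup E] {f : E → ℝ}
    {L a s : ℝ} (hf : ∀ x, 0 < f x) (hlip : ∀ x z, |Real.log (f z) - Real.log (f x)| ≤ L * ‖z - x‖)
    (hs : 0 ≤ s) (hsa : s * L ≤ a) (x z : E) :
    f z ^ (-s) ≤ f x ^ (-s) * Real.exp (a * ‖z - x‖) := by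
  have hlog : Real.log (f x) - Real.log (f z) ≤ L * ‖z - x‖ :=
    (le_abs_self _).trans ((abs_sub_comm _ _).le.trans (hlip x z))
  calc f z ^ (-s) ≤ f x ^ (-s) * Real.exp (s * (L * ‖z - x‖)) :=
        Real.rpow_neg_le_mul_exp_of_log_sub_le (hf z) (hf x) hs hlog
    _ ≤ f x ^ (-s) * Real.exp (a * ‖z - x‖) := by
        rw [← mul_assoc]
        have hfx : 0 ≤ f x := (hf x).le
        gcongr ?_ * Real.exp (?_ * _)

theorem integral_le_mul_integral_of_le_comp_sub {G : Type*} [AddGroup G] [MeasurableSpace G]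
    [MeasurableAdd G] (μ : Measure G) [μ.IsAddRightInvariant] {f g : G → ℝ} (hf : 0 ≤ f)
    (hg : Integrable g μ) (c : ℝ) (x : G) (hfg : ∀ z, f z ≤ c * g (z - x)) :
    ∫ z, f z ∂μ ≤ c * ∫ u, g u ∂μ :=
  calc ∫ z, f z ∂μ ≤ ∫ z, c * g (z - x) ∂μ :=
        integral_mono_of_nonneg (.of_forall hf) ((hg.comp_sub_right x).const_mul c)
          (.of_forall hfg)
    _ = c * ∫ u, g u ∂μ := by rw [integral_const_mul, integral_sub_right_eq_self g x]

theorem rw_proposal_drift_bound_general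
    (d : ℕ) (pi : EuclideanSpace ℝ (Fin d) → ℝ) (L a : ℝ) (q : ℝ → ℝ)
    (hL : 0 < L)
    (hpi_pos : ∀ x, 0 < pi x)
    (hlip : ∀ x z, |Real.log (pi z) - Real.log (pi x)| ≤ L * ‖z - x‖)
    (hq_nonneg : ∀ r : ℝ, 0 ≤ q r)
    (hK : Integrable (fun u : EuclideanSpace ℝ (Fin d) => Real.exp (a * ‖u‖) * q ‖u‖))
    (s : ℝ) (hs0 : 0 < s) (hs1 : s < min 1 (a / L))
    (x : EuclideanSpace ℝ (Fin d)) :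
    ∫ z, pi z ^ (-s) * q ‖z - x‖
      ≤ (∫ u : EuclideanSpace ℝ (Fin d), Real.exp (a * ‖u‖) * q ‖u‖) * pi x ^ (-s) := by
  have hsL : s * L ≤ a := ((lt_div_iff₀ hL).mp (hs1.trans_le (min_le_right _ _))).le
  rw [mul_comm]
  refine integral_le_mul_integral_of_le_comp_sub volume
    (fun z => mul_nonneg (Real.rpow_nonneg (hpi_pos z).le _) (hq_nonneg _)) hK _ x fun z => ?_
  rw [← mul_assoc]
  exact mul_le_mul_of_nonneg_right
    (rpow_neg_le_mul_exp_of_abs_log_sub_le hpi_pos hlip hs0.le hsL x z) (hq_nonneg _)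

/-- If `π : ℝ^d → (0,∞)` is a log-Lipschitz probability density with
constant `L > 0`, and `q` defines a random-walk proposal density `q(‖z-x‖)` with
`K := ∫ exp(a‖u‖) q(‖u‖) du < ∞` for some `a > 0`, then for any `0 < s < min{1, a/L}`, the
function `V = π^{-s}` satisfies `∫ V(z) q(‖z-x‖) dz ≤ K V(x)` for every `x`. -/
theorem rw_proposal_drift_bound
    (d : ℕ) (pi : EuclideanSpace ℝ (Fin d) → ℝ) (L a : ℝ) (q : ℝ → ℝ)
    (hL : 0 < L) (ha : 0 < a)
    (hpi_pos : ∀ x, 0 < pi x)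
    (hpi_prob : ∫ x, pi x = 1)
    (hlip : ∀ x z, |Real.log (pi z) - Real.log (pi x)| ≤ L * ‖z - x‖)
    (hq_nonneg : ∀ r : ℝ, 0 ≤ q r)
    (hq_prob : ∫ u : EuclideanSpace ℝ (Fin d), q ‖u‖ = 1)
    (hK : Integrable (fun u : EuclideanSpace ℝ (Fin d) => Real.exp (a * ‖u‖) * q ‖u‖))
    (s : ℝ) (hs0 : 0 < s) (hs1 : s < min 1 (a / L))
    (x : EuclideanSpace ℝ (Fin d)) :
    ∫ z, pi z ^ (-s) * q ‖z - x‖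
      ≤ (∫ u : EuclideanSpace ℝ (Fin d), Real.exp (a * ‖u‖) * q ‖u‖) * pi x ^ (-s) :=
  rw_proposal_drift_bound_general d pi L a q hL hpi_pos hlip hq_nonneg hK s hs0 hs1 x
end

section
/- Let W^{(1)}, W^{(2)}, ... be i.i.d. strictly positive random variables with E[W^{(1)}] = 1 and E[(W^{(1)})^{-1}] < ∞, and set W_N = (1/N) ∑_{k=1}^N W^{(k)}. Then lim_{N→∞} E[W_N^{-1}] = 1. -/
/-!
By the strong law of large numbers, almost surely `W_N → 1` and the averages
`G_N = N⁻¹ ∑_{k ≤ N} (W⁽ᵏ⁾)⁻¹` tend to `E[(W⁽¹⁾)⁻¹]`, which is also the expectation of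
every `G_N`. By the HM–AM inequality `0 ≤ W_N⁻¹ ≤ G_N`, so dominated convergence with the
moving dominating sequence `G_N` (Pratt's lemma, proved from Fatou's lemma applied to
`G_N ± W_N⁻¹`) gives `E[W_N⁻¹] → 1`.
-/

open MeasureTheory ProbabilityTheory Filter Finset Topology

lemma inv_average_le_average_inv {ι : Type*} (s : Finset ι) {w : ι → ℝ}
    (hw : ∀ i ∈ s, 0 < w i) :
    ((#s : ℝ)⁻¹ * ∑ i ∈ s, w i)⁻¹ ≤ (#s : ℝ)⁻¹ * ∑ i ∈ s, (w i)⁻¹ := by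
  rcases s.eq_empty_or_nonempty with rfl | hs
  · simp
  have hweights : ∑ _i ∈ s, (#s : ℝ)⁻¹ = 1 := by
    rw [sum_const, nsmul_eq_mul, mul_inv_cancel₀ (by simpa using hs.ne_empty)]
  simpa only [smul_eq_mul, ← mul_sum, zpow_neg_one] using
    (convexOn_zpow (-1)).map_sum_le (fun _ _ => by positivity) hweights hw

namespace MeasureTheory

variable {α : Type*} [MeasurableSpace α] {μ : Measure α}

theorem eventually_lt_integral_of_tendsto_ae {h : ℕ → α → ℝ} {φ : α → ℝ}
    (h_nonneg : ∀ n, ∀ᵐ a ∂μ, 0 ≤ h n a) (h_int : ∀ n, Integrable (h n) μ)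
    (hφ : Integrable φ μ) (h_lim : ∀ᵐ a ∂μ, Tendsto (fun n => h n a) atTop (𝓝 (φ a)))
    {b : ℝ} (hb : b < ∫ a, φ a ∂μ) :
    ∀ᶠ n in atTop, b < ∫ a, h n a ∂μ := by
  rcases lt_or_ge b 0 with hb0 | hb0
  · exact .of_forall fun n => hb0.trans_le (integral_nonneg_of_ae (h_nonneg n))
  have hφ_nonneg : 0 ≤ᵐ[μ] φ := by
    filter_upwards [h_lim, ae_all_iff.2 h_nonneg] with a ha ha'
    exact ge_of_tendsto' ha ha'
  have fatou : ENNReal.ofReal (∫ a, φ a ∂μ) ≤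
      liminf (fun n => ENNReal.ofReal (∫ a, h n a ∂μ)) atTop := by
    rw [ofReal_integral_eq_lintegral_ofReal hφ hφ_nonneg]
    simp_rw [ofReal_integral_eq_lintegral_ofReal (h_int _) (h_nonneg _)]
    calc ∫⁻ a, ENNReal.ofReal (φ a) ∂μ
        = ∫⁻ a, liminf (fun n => ENNReal.ofReal (h n a)) atTop ∂μ :=
          lintegral_congr_ae <| h_lim.mono fun a ha =>
            (ENNReal.tendsto_ofReal ha).liminf_eq.symm
      _ ≤ _ := lintegral_liminf_le' fun n => (h_int n).aemeasurable.ennreal_ofReal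
  filter_upwards [eventually_lt_of_lt_liminf
    (((ENNReal.ofReal_lt_ofReal_iff_of_nonneg hb0).2 hb).trans_le fatou)] with n hn
  exact (ENNReal.ofReal_lt_ofReal_iff_of_nonneg hb0).1 hn

theorem tendsto_integral_of_tendsto_integral_bound {F G : ℕ → α → ℝ} {f g : α → ℝ}
    (hF_meas : ∀ n, AEStronglyMeasurable (F n) μ) (hG_int : ∀ n, Integrable (G n) μ)
    (hg_int : Integrable g μ) (h_bound : ∀ n, ∀ᵐ a ∂μ, |F n a| ≤ G n a)
    (hF_lim : ∀ᵐ a ∂μ, Tendsto (fun n => F n a) atTop (𝓝 (f a)))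
    (hG_lim : ∀ᵐ a ∂μ, Tendsto (fun n => G n a) atTop (𝓝 (g a)))
    (h_integral_lim : Tendsto (fun n => ∫ a, G n a ∂μ) atTop (𝓝 (∫ a, g a ∂μ))) :
    Tendsto (fun n => ∫ a, F n a ∂μ) atTop (𝓝 (∫ a, f a ∂μ)) := by
  have hF_int (n : ℕ) : Integrable (F n) μ :=
    (hG_int n).mono' (hF_meas n) (by simpa only [Real.norm_eq_abs] using h_bound n)
  have hf_int : Integrable f μ := by
    refine hg_int.mono' (aestronglyMeasurable_of_tendsto_ae _ hF_meas hF_lim) ?_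
    filter_upwards [hF_lim, hG_lim, ae_all_iff.2 h_bound] with a hFa hGa hbound
    exact le_of_tendsto_of_tendsto' hFa.abs hGa hbound
  have h_add : ∀ b < ∫ a, g a ∂μ + ∫ a, f a ∂μ,
      ∀ᶠ n in atTop, b < ∫ a, G n a ∂μ + ∫ a, F n a ∂μ := by
    intro b hb
    have := eventually_lt_integral_of_tendsto_ae (h := fun n a => G n a + F n a)
      (φ := fun a => g a + f a)
      (fun n => (h_bound n).mono fun a ha => by linarith [neg_abs_le (F n a)])
      (fun n => (hG_int n).add (hF_int n)) (hg_int.add hf_int)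
      (hG_lim.and hF_lim |>.mono fun a ha => ha.1.add ha.2) (b := b)
      (by rwa [integral_add hg_int hf_int])
    simpa only [integral_add (hG_int _) (hF_int _)] using this
  have h_sub : ∀ b < ∫ a, g a ∂μ - ∫ a, f a ∂μ,
      ∀ᶠ n in atTop, b < ∫ a, G n a ∂μ - ∫ a, F n a ∂μ := by
    intro b hb
    have := eventually_lt_integral_of_tendsto_ae (h := fun n a => G n a - F n a)
      (φ := fun a => g a - f a)
      (fun n => (h_bound n).mono fun a ha => by linarith [le_abs_self (F n a)])
      (fun n => (hG_int n).sub (hF_int n)) (hg_int.sub hf_int)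
      (hG_lim.and hF_lim |>.mono fun a ha => ha.1.sub ha.2) (b := b)
      (by rwa [integral_sub hg_int hf_int])
    simpa only [integral_sub (hG_int _) (hF_int _)] using this
  refine tendsto_order.2 ⟨fun b hb => ?_, fun b hb => ?_⟩
  · filter_upwards [h_add (∫ a, g a ∂μ + (b + ∫ a, f a ∂μ) / 2) (by linarith),
      (tendsto_order.1 h_integral_lim).2 (∫ a, g a ∂μ + (∫ a, f a ∂μ - b) / 2)
        (by linarith)] with n h₁ h₂
    linarith
  · filter_upwards [h_sub (∫ a, g a ∂μ - (b + ∫ a, f a ∂μ) / 2) (by linarith),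
      (tendsto_order.1 h_integral_lim).2 (∫ a, g a ∂μ + (b - ∫ a, f a ∂μ) / 2)
        (by linarith)] with n h₁ h₂
    linarith

end MeasureTheory

namespace ProbabilityTheory

variable {Ω : Type*} [MeasurableSpace Ω] {μ : Measure Ω}

theorem integral_average_of_identDistrib {X : ℕ → Ω → ℝ}
    (hident : ∀ k, IdentDistrib (X k) (X 0) μ μ) (hint : Integrable (X 0) μ) {N : ℕ}
    (hN : N ≠ 0) :
    ∫ ω, (N : ℝ)⁻¹ * ∑ k ∈ range N, X k ω ∂μ = ∫ ω, X 0 ω ∂μ := by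
  rw [integral_const_mul, integral_finsetSum _ fun k _ => (hident k).integrable_iff.2 hint]
  simp only [fun k => (hident k).integral_eq, sum_const, card_range, nsmul_eq_mul]
  field_simp

theorem strong_law_ae_comp {β : Type*} [MeasurableSpace β] {X : ℕ → Ω → β}
    (hindep : iIndepFun X μ) (hident : ∀ k, IdentDistrib (X k) (X 0) μ μ) {φ : β → ℝ}
    (hφ : Measurable φ) (hint : Integrable (fun ω => φ (X 0 ω)) μ) :
    ∀ᵐ ω ∂μ, Tendsto (fun N : ℕ => (N : ℝ)⁻¹ * ∑ k ∈ range N, φ (X k ω)) atTop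
      (𝓝 (∫ ω, φ (X 0 ω) ∂μ)) := by
  simpa only [div_eq_inv_mul] using strong_law_ae_real (fun k ω => φ (X k ω)) hint
    (fun i j hij => (hindep.comp (fun _ => φ) fun _ => hφ).indepFun hij)
    (fun k => (hident k).comp hφ)

end ProbabilityTheory

theorem inverse_moment_of_average_tendsto_one_general
    {Ω : Type*} [MeasurableSpace Ω] (μ : Measure Ω) [IsProbabilityMeasure μ]
    (W : ℕ → Ω → ℝ)
    (hindep : iIndepFun W μ)
    (hident : ∀ k, IdentDistrib (W k) (W 0) μ μ)
    (hpos : ∀ k, ∀ᵐ ω ∂μ, 0 < W k ω)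
    (hmean : ∫ ω, W 0 ω ∂μ = 1)
    (hinv : Integrable (fun ω => (W 0 ω)⁻¹) μ) :
    Tendsto (fun N : ℕ => ∫ ω, ((N : ℝ)⁻¹ * ∑ k ∈ Finset.range N, W k ω)⁻¹ ∂μ)
      atTop (nhds 1) := by
  have hW_meas (k : ℕ) : AEMeasurable (W k) μ := (hident k).aemeasurable_fst
  have hW_int : Integrable (W 0) μ := by
    by_contra h
    simp [integral_undef h] at hmean
  have hinv_ident (k : ℕ) : IdentDistrib (fun ω => (W k ω)⁻¹) (fun ω => (W 0 ω)⁻¹) μ μ :=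
    (hident k).comp measurable_inv
  have h_bound (N : ℕ) : ∀ᵐ ω ∂μ, |((N : ℝ)⁻¹ * ∑ k ∈ range N, W k ω)⁻¹| ≤
      (N : ℝ)⁻¹ * ∑ k ∈ range N, (W k ω)⁻¹ := by
    filter_upwards [ae_all_iff.2 hpos] with ω hω
    have hsum : 0 ≤ ∑ k ∈ range N, W k ω := sum_nonneg fun k _ => (hω k).le
    rw [abs_of_nonneg (by positivity)]
    simpa only [card_range] using inv_average_le_average_inv (range N) fun k _ => hω k
  have h_lim : ∀ᵐ ω ∂μ,
      Tendsto (fun N : ℕ => ((N : ℝ)⁻¹ * ∑ k ∈ range N, W k ω)⁻¹) atTop (𝓝 1) := by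
    filter_upwards [strong_law_ae_comp hindep hident measurable_id' hW_int] with ω hω
    rw [hmean] at hω
    simpa only [inv_one] using hω.inv₀ one_ne_zero
  have h_integral_lim : Tendsto (fun N : ℕ => ∫ ω, (N : ℝ)⁻¹ * ∑ k ∈ range N, (W k ω)⁻¹ ∂μ)
      atTop (𝓝 (∫ _ω, ∫ ω, (W 0 ω)⁻¹ ∂μ ∂μ)) := by
    rw [integral_const, probReal_univ, one_smul]
    exact tendsto_const_nhds.congr' <| (eventually_ne_atTop 0).mono fun N hN =>
      (integral_average_of_identDistrib hinv_ident hinv hN).symm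
  simpa only [integral_const, probReal_univ, one_smul] using
    tendsto_integral_of_tendsto_integral_bound (fun N => by fun_prop)
      (fun N => (integrable_finsetSum _ fun k _ =>
        (hinv_ident k).integrable_iff.2 hinv).const_mul _)
      (integrable_const _) h_bound h_lim (strong_law_ae_comp hindep hident measurable_inv hinv)
      h_integral_lim

/-- If `W⁽¹⁾, W⁽²⁾, …` are i.i.d. strictly positive random variables with
`E[W⁽¹⁾] = 1` and `E[(W⁽¹⁾)⁻¹] < ∞`, and `W_N = N⁻¹ ∑_{k=1}^N W⁽ᵏ⁾`, then
`lim_{N→∞} E[W_N⁻¹] = 1`. -/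
theorem inverse_moment_of_average_tendsto_one
    {Ω : Type*} [MeasurableSpace Ω] (μ : Measure Ω) [IsProbabilityMeasure μ]
    (W : ℕ → Ω → ℝ) (hmeas : ∀ k, Measurable (W k))
    (hindep : iIndepFun W μ)
    (hident : ∀ k, IdentDistrib (W k) (W 0) μ μ)
    (hpos : ∀ k, ∀ᵐ ω ∂μ, 0 < W k ω)
    (hmean : ∫ ω, W 0 ω ∂μ = 1)
    (hinv : Integrable (fun ω => (W 0 ω)⁻¹) μ) :
    Tendsto (fun N : ℕ => ∫ ω, ((N : ℝ)⁻¹ * ∑ k ∈ Finset.range N, W k ω)⁻¹ ∂μ)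
      atTop (nhds 1) :=
  inverse_moment_of_average_tendsto_one_general μ W hindep hident hpos hmean hinv
end

section
/- Let γ ∈ (0,1) and let Z_1, ..., Z_N be strictly positive independent random variables such that for each i ∈ {1,...,N} and every z ∈ (0,γ), P[Z_i ≤ z] ≤ M_i z^{α_i} with α_i > 0 and M_i < ∞. Then for every z ∈ (0,γ), P[∑_{i=1}^N Z_i ≤ z] ≤ (∏_{i=1}^N M_i) · z^{∑_{i=1}^N α_i}. -/
/-!
If a sum of nonnegative terms is at most `z`, then so is every term. Hence the event
`∑ i, Z i ≤ z` is contained in `⋂ i, {Z i ≤ z}`, whose probability factorises by independence,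
and the marginal bounds multiply to `(∏ i, M i) * z ^ (∑ i, α i)`.
-/

open MeasureTheory ProbabilityTheory

namespace ProbabilityTheory

variable {ι Ω : Type*} [Fintype ι] [MeasurableSpace Ω] {μ : Measure Ω} {Z : ι → Ω → ℝ}

lemma setOf_sum_le_ae_le_iInter (hZ : ∀ i, 0 ≤ᵐ[μ] Z i) (z : ℝ) :
    {ω | ∑ i, Z i ω ≤ z} ≤ᵐ[μ] ⋂ i, {ω | Z i ω ≤ z} := by
  filter_upwards [ae_all_iff.mpr hZ] with ω hω hsum
  exact Set.mem_iInter.mpr fun i =>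
    (Finset.single_le_sum (fun j _ => hω j) (Finset.mem_univ i)).trans hsum

lemma iIndepFun.measure_sum_le_le_prod (hindep : iIndepFun Z μ) (hZ : ∀ i, 0 ≤ᵐ[μ] Z i)
    (z : ℝ) : μ {ω | ∑ i, Z i ω ≤ z} ≤ ∏ i, μ {ω | Z i ω ≤ z} :=
  calc μ {ω | ∑ i, Z i ω ≤ z} ≤ μ (⋂ i, {ω | Z i ω ≤ z}) :=
        measure_mono_ae (setOf_sum_le_ae_le_iInter hZ z)
    _ = ∏ i, μ {ω | Z i ω ≤ z} :=
        hindep.meas_iInter fun _ => ⟨Set.Iic z, measurableSet_Iic, rfl⟩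

end ProbabilityTheory

theorem sum_of_independent_small_ball_bound_general
    {Ω : Type*} [MeasurableSpace Ω] (μ : Measure Ω) [IsProbabilityMeasure μ]
    (N : ℕ) (Z : Fin N → Ω → ℝ)
    (hindep : iIndepFun Z μ)
    (hpos : ∀ i, ∀ᵐ ω ∂μ, 0 < Z i ω)
    (γ : ℝ)
    (M α : Fin N → ℝ)
    (hbd : ∀ i, ∀ z : ℝ, 0 < z → z < γ → (μ {ω | Z i ω ≤ z}).toReal ≤ M i * z ^ α i)
    (z : ℝ) (hz0 : 0 < z) (hzγ : z < γ) :
    (μ {ω | ∑ i, Z i ω ≤ z}).toReal ≤ (∏ i, M i) * z ^ (∑ i, α i) := by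
  have hnonneg : ∀ i, 0 ≤ᵐ[μ] Z i := fun i => (hpos i).mono fun _ h => h.le
  calc (μ {ω | ∑ i, Z i ω ≤ z}).toReal
      ≤ ∏ i, (μ {ω | Z i ω ≤ z}).toReal := by
        rw [← ENNReal.toReal_prod]
        exact ENNReal.toReal_mono (ENNReal.prod_ne_top fun _ _ => measure_ne_top μ _)
          (hindep.measure_sum_le_le_prod hnonneg z)
    _ ≤ ∏ i, (M i * z ^ α i) :=
        Finset.prod_le_prod (fun _ _ => ENNReal.toReal_nonneg) fun i _ => hbd i z hz0 hzγ
    _ = (∏ i, M i) * z ^ (∑ i, α i) := by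
        rw [Finset.prod_mul_distrib, ← Real.rpow_sum_of_pos hz0]

/-- Let `γ ∈ (0,1)` and `Z_1, …, Z_N` strictly positive independent random
variables with `P[Z_i ≤ z] ≤ M_i z^{α_i}` for all `z ∈ (0,γ)`, where `α_i > 0` and
`M_i < ∞`.  Then for every `z ∈ (0,γ)`,
`P[∑ Z_i ≤ z] ≤ (∏ M_i) z^{∑ α_i}`. -/
theorem sum_of_independent_small_ball_bound
    {Ω : Type*} [MeasurableSpace Ω] (μ : Measure Ω) [IsProbabilityMeasure μ]
    (N : ℕ) (hN : 0 < N) (Z : Fin N → Ω → ℝ)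
    (hmeas : ∀ i, Measurable (Z i))
    (hindep : iIndepFun Z μ)
    (hpos : ∀ i, ∀ᵐ ω ∂μ, 0 < Z i ω)
    (γ : ℝ) (hγ0 : 0 < γ) (hγ1 : γ < 1)
    (M α : Fin N → ℝ) (hα : ∀ i, 0 < α i) (hM : ∀ i, 0 ≤ M i)
    (hbd : ∀ i, ∀ z : ℝ, 0 < z → z < γ → (μ {ω | Z i ω ≤ z}).toReal ≤ M i * z ^ α i)
    (z : ℝ) (hz0 : 0 < z) (hzγ : z < γ) :
    (μ {ω | ∑ i, Z i ω ≤ z}).toReal ≤ (∏ i, M i) * z ^ (∑ i, α i) :=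
  sum_of_independent_small_ball_bound_general μ N Z hindep hpos γ M α hbd z hz0 hzγ
end

section
/- Let W^{(1)}, W^{(2)}, ... be i.i.d. strictly positive random variables and set W_N = (1/N) ∑_{k=1}^N W^{(k)}. Let p > 0 and suppose E[W_{N_0}^{-p}] < ∞ for some N_0 ∈ ℕ⁺. Then for every N ≥ N_0, E[W_{N+1}^{-p}] ≤ E[W_N^{-p}]. -/
/-!
With `S = W⁽¹⁾ + ⋯ + W⁽ᴺ⁺¹⁾`, `W_{N+1} = S / (N + 1)` is the
mean of the `N + 1` leave-one-out averages `(S - W⁽ʲ⁾) / N`, so convexity of `x ↦ x ^ (-p)` on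
`(0, ∞)` gives `W_{N+1} ^ (-p) ≤ (N + 1)⁻¹ ∑ⱼ ((S - W⁽ʲ⁾) / N) ^ (-p)`. Each leave-one-out average
is a sum of `N` i.i.d. copies divided by `N`, hence has the law of `W_N`; taking expectations
gives the claim.
-/

open MeasureTheory ProbabilityTheory Set Finset
open scoped ENNReal

theorem convexOn_rpow_of_nonpos {q : ℝ} (hq : q ≤ 0) :
    ConvexOn ℝ (Ioi 0) fun x : ℝ => x ^ q := by
  refine ⟨convex_Ioi 0, fun x (hx : 0 < x) y (hy : 0 < y) a b ha hb hab => ?_⟩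
  calc (a • x + b • y) ^ q ≤ (x ^ a * y ^ b) ^ q :=
        Real.rpow_le_rpow_of_nonpos (by positivity)
          (Real.geom_mean_le_arith_mean2_weighted ha hb hx.le hy.le hab) hq
    _ = (x ^ q) ^ a * (y ^ q) ^ b := by
        rw [Real.mul_rpow (by positivity) (by positivity), ← Real.rpow_mul hx.le,
          ← Real.rpow_mul hy.le, ← Real.rpow_mul hx.le, ← Real.rpow_mul hy.le, mul_comm a,
          mul_comm b]
    _ ≤ a • x ^ q + b • y ^ q :=
        Real.geom_mean_le_arith_mean2_weighted ha hb (by positivity) (by positivity) hab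

theorem Finset.sum_sum_erase {ι M : Type*} [DecidableEq ι] [AddCommGroup M] {s : Finset ι}
    {n : ℕ} (hs : #s = n + 1) (x : ι → M) :
    ∑ j ∈ s, ∑ i ∈ s.erase j, x i = n • ∑ i ∈ s, x i := by
  rw [Finset.sum_congr rfl fun j hj => Finset.sum_erase_eq_sub hj, Finset.sum_sub_distrib,
    Finset.sum_const, hs, succ_nsmul, add_sub_cancel_right]

theorem ConvexOn.map_average_le_average_map_average_erase {ι E : Type*} [DecidableEq ι]
    [AddCommGroup E] [Module ℝ E] {C : Set E} {f : E → ℝ} (hf : ConvexOn ℝ C f)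
    {s : Finset ι} {n : ℕ} (hn : n ≠ 0) (hs : #s = n + 1) {x : ι → E} (hx : ∀ i ∈ s, x i ∈ C) :
    f (((n : ℝ) + 1)⁻¹ • ∑ i ∈ s, x i)
      ≤ ∑ j ∈ s, ((n : ℝ) + 1)⁻¹ * f ((n : ℝ)⁻¹ • ∑ i ∈ s.erase j, x i) := by
  have hn' : (n : ℝ) ≠ 0 := Nat.cast_ne_zero.2 hn
  have mem_C : ∀ j ∈ s, (n : ℝ)⁻¹ • ∑ i ∈ s.erase j, x i ∈ C := by
    intro j hj
    rw [Finset.smul_sum]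
    refine hf.1.sum_mem (fun _ _ => by positivity) ?_ fun i hi => hx i (mem_of_mem_erase hi)
    rw [Finset.sum_const, Finset.card_erase_of_mem hj, hs, nsmul_eq_mul]
    simp [hn']
  have average_eq : ∑ j ∈ s, ((n : ℝ) + 1)⁻¹ • (n : ℝ)⁻¹ • ∑ i ∈ s.erase j, x i
      = ((n : ℝ) + 1)⁻¹ • ∑ i ∈ s, x i := by
    rw [← Finset.smul_sum, ← Finset.smul_sum, Finset.sum_sum_erase hs, ← Nat.cast_smul_eq_nsmul ℝ,
      inv_smul_smul₀ hn']
  have hw : ∑ j ∈ s, ((n : ℝ) + 1)⁻¹ = 1 := by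
    rw [Finset.sum_const, hs, nsmul_eq_mul]
    push_cast
    exact mul_inv_cancel₀ (by positivity)
  simpa only [average_eq, smul_eq_mul] using
    hf.map_sum_le (fun _ _ => by positivity) hw mem_C

theorem ProbabilityTheory.iIndepFun.identDistrib_sum_of_card_eq {Ω ι E : Type*}
    [MeasurableSpace Ω] {μ : Measure Ω} [MeasurableSpace E] [AddCommMonoid E] [MeasurableAdd₂ E]
    {W : ι → Ω → E} (hindep : iIndepFun W μ) (hident : ∀ i j, IdentDistrib (W i) (W j) μ μ)
    {s t : Finset ι} (hst : #s = #t) :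
    IdentDistrib (fun ω => ∑ i ∈ s, W i ω) (fun ω => ∑ i ∈ t, W i ω) μ μ := by
  let e : s ≃ t := Finset.equivOfCardEq hst
  have hvec : IdentDistrib (fun ω (i : s) => W i ω) (fun ω (i : s) => W (e i) ω) μ μ :=
    IdentDistrib.pi (fun i => hident i (e i)) (hindep.precomp Subtype.val_injective)
      (hindep.precomp (Subtype.val_injective.comp e.injective))
  have hsum := hvec.comp (Finset.measurable_sum Finset.univ fun i _ => measurable_pi_apply i)
  convert hsum using 2 with ω ω
  · exact (Finset.sum_coe_sort s fun i => W i ω).symm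
  · exact ((e.sum_comp fun i : t => W i ω).trans (Finset.sum_coe_sort t fun i => W i ω)).symm

theorem ENNReal.natCast_succ_mul_ofReal_inv (n : ℕ) :
    ((n + 1 : ℕ) : ℝ≥0∞) * ENNReal.ofReal (((n : ℝ) + 1)⁻¹) = 1 := by
  rw [← ENNReal.ofReal_natCast, ← ENNReal.ofReal_mul (by positivity), Nat.cast_succ,
    mul_inv_cancel₀ (by positivity), ENNReal.ofReal_one]

theorem ProbabilityTheory.iIndepFun.lintegral_ofReal_convex_average_succ_le {Ω ι : Type*}
    [MeasurableSpace Ω] {μ : Measure Ω} [DecidableEq ι] {W : ι → Ω → ℝ} (hindep : iIndepFun W μ)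
    (hident : ∀ i j, IdentDistrib (W i) (W j) μ μ) {C : Set ℝ} {f : ℝ → ℝ}
    (hf : ConvexOn ℝ C f) (hf_meas : Measurable f) (hW : ∀ i, ∀ᵐ ω ∂μ, W i ω ∈ C)
    {s t : Finset ι} {n : ℕ} (hn : n ≠ 0) (hs : #s = n + 1) (ht : #t = n) :
    ∫⁻ ω, ENNReal.ofReal (f (((n : ℝ) + 1)⁻¹ * ∑ i ∈ s, W i ω)) ∂μ
      ≤ ∫⁻ ω, ENNReal.ofReal (f ((n : ℝ)⁻¹ * ∑ i ∈ t, W i ω)) ∂μ := by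
  set g : ℝ → ℝ≥0∞ := fun x => ENNReal.ofReal (f ((n : ℝ)⁻¹ * x))
  have hg : Measurable g := (hf_meas.comp (measurable_const_mul _)).ennreal_ofReal
  have hident_erase : ∀ j ∈ s, IdentDistrib (fun ω => ∑ i ∈ s.erase j, W i ω)
      (fun ω => ∑ i ∈ t, W i ω) μ μ := fun j hj =>
    hindep.identDistrib_sum_of_card_eq hident (by rw [card_erase_of_mem hj, hs, ht]; rfl)
  have hg_erase : ∀ j ∈ s, AEMeasurable (fun ω => g (∑ i ∈ s.erase j, W i ω)) μ :=
    fun j hj => ((hident_erase j hj).comp hg).aemeasurable_fst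
  have pointwise : ∀ᵐ ω ∂μ, ENNReal.ofReal (f (((n : ℝ) + 1)⁻¹ * ∑ i ∈ s, W i ω))
      ≤ ∑ j ∈ s, ENNReal.ofReal (((n : ℝ) + 1)⁻¹) * g (∑ i ∈ s.erase j, W i ω) := by
    filter_upwards [(s.eventually_all).2 fun i _ => hW i] with ω hω
    calc _ ≤ ENNReal.ofReal (∑ j ∈ s, ((n : ℝ) + 1)⁻¹ * f ((n : ℝ)⁻¹ * ∑ i ∈ s.erase j, W i ω)) :=
          ENNReal.ofReal_le_ofReal (by
            simpa only [smul_eq_mul] using hf.map_average_le_average_map_average_erase hn hs hω)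
      _ ≤ ∑ j ∈ s, ENNReal.ofReal (((n : ℝ) + 1)⁻¹ * f ((n : ℝ)⁻¹ * ∑ i ∈ s.erase j, W i ω)) :=
          le_sum_of_subadditive _ ENNReal.ofReal_zero.le (fun _ _ => ENNReal.ofReal_add_le) _ _
      _ = _ := Finset.sum_congr rfl fun j _ => ENNReal.ofReal_mul (by positivity)
  calc _ ≤ ∫⁻ ω, ∑ j ∈ s, ENNReal.ofReal (((n : ℝ) + 1)⁻¹) * g (∑ i ∈ s.erase j, W i ω) ∂μ :=
        lintegral_mono_ae pointwise
    _ = ∑ j ∈ s, ENNReal.ofReal (((n : ℝ) + 1)⁻¹) * ∫⁻ ω, g (∑ i ∈ t, W i ω) ∂μ := by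
        rw [lintegral_finsetSum' _ fun j hj => (hg_erase j hj).const_mul _]
        refine Finset.sum_congr rfl fun j hj => ?_
        rw [lintegral_const_mul'' _ (hg_erase j hj)]
        exact congrArg _ ((hident_erase j hj).comp hg).lintegral_eq
    _ = _ := by
        rw [Finset.sum_const, hs, nsmul_eq_mul, ← mul_assoc, ENNReal.natCast_succ_mul_ofReal_inv,
          one_mul]

theorem negative_moments_of_averages_monotone_general
    {Ω : Type*} [MeasurableSpace Ω] (μ : Measure Ω)
    (W : ℕ → Ω → ℝ)
    (hindep : iIndepFun W μ)
    (hident : ∀ k, IdentDistrib (W k) (W 0) μ μ)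
    (hpos : ∀ k, ∀ᵐ ω ∂μ, 0 < W k ω)
    (p : ℝ) (hp : 0 < p) (N₀ : ℕ) (hN₀ : 0 < N₀) :
    ∀ N, N₀ ≤ N →
      ∫⁻ ω, ENNReal.ofReal ((((N : ℝ) + 1)⁻¹ * ∑ k ∈ Finset.range (N + 1), W k ω) ^ (-p)) ∂μ
        ≤ ∫⁻ ω, ENNReal.ofReal (((N : ℝ)⁻¹ * ∑ k ∈ Finset.range N, W k ω) ^ (-p)) ∂μ := by
  intro N hN
  exact hindep.lintegral_ofReal_convex_average_succ_le
    (fun i j => (hident i).trans (hident j).symm)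
    (convexOn_rpow_of_nonpos (neg_nonpos.2 hp.le)) (measurable_id.pow_const _) hpos
    (by omega) (card_range _) (card_range _)

/-- Let `W⁽¹⁾, W⁽²⁾, …` be i.i.d. strictly positive random variables and
`W_N = N⁻¹ ∑_{k=1}^N W⁽ᵏ⁾`.  Let `p > 0` and suppose `E[W_{N₀}^{-p}] < ∞` for some `N₀ ≥ 1`.
Then for every `N ≥ N₀`, `E[W_{N+1}^{-p}] ≤ E[W_N^{-p}]`. -/
theorem negative_moments_of_averages_monotone
    {Ω : Type*} [MeasurableSpace Ω] (μ : Measure Ω) [IsProbabilityMeasure μ]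
    (W : ℕ → Ω → ℝ) (hmeas : ∀ k, Measurable (W k))
    (hindep : iIndepFun W μ)
    (hident : ∀ k, IdentDistrib (W k) (W 0) μ μ)
    (hpos : ∀ k, ∀ᵐ ω ∂μ, 0 < W k ω)
    (p : ℝ) (hp : 0 < p) (N₀ : ℕ) (hN₀ : 0 < N₀)
    (hfin : ∫⁻ ω, ENNReal.ofReal (((N₀ : ℝ)⁻¹ * ∑ k ∈ Finset.range N₀, W k ω) ^ (-p)) ∂μ
      < ⊤) :
    ∀ N, N₀ ≤ N →
      ∫⁻ ω, ENNReal.ofReal ((((N : ℝ) + 1)⁻¹ * ∑ k ∈ Finset.range (N + 1), W k ω) ^ (-p)) ∂μ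
        ≤ ∫⁻ ω, ENNReal.ofReal (((N : ℝ)⁻¹ * ∑ k ∈ Finset.range N, W k ω) ^ (-p)) ∂μ :=
  negative_moments_of_averages_monotone_general μ W hindep hident hpos p hp N₀ hN₀
end

section
/- Let W₁ and W₂ be i.i.d. strictly positive random variables and set Z = W₁/W₂. Then for every finite k > 1, E[min{1, kZ}] > E[min{1, k^{-1}Z}]. -/
open MeasureTheory ProbabilityTheory

/-! Put `Z = W₁ / W₂`. Pointwise, `min 1 (k⁻¹ Z) ≤ min 1 (k Z)` since `Z > 0`, and the inequality is
strict wherever `Z ≤ 1`, because there `k⁻¹ Z < 1`. By exchangeability of `(W₁, W₂)` the events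
`W₁ ≤ W₂` and `W₂ ≤ W₁` have the same probability; as they cover `Ω`, that probability is at
least `1/2`, so the two integrands differ on a set of positive measure. -/

section Exchangeable

variable {Ω α : Type*} [MeasurableSpace Ω] {μ : Measure Ω} [MeasurableSpace α] {X Y : Ω → α}

theorem ProbabilityTheory.IndepFun.map_prodMk_swap_eq_of_identDistrib [IsFiniteMeasure μ]
    (hind : IndepFun X Y μ) (hid : IdentDistrib X Y μ μ) :
    μ.map (fun ω ↦ (Y ω, X ω)) = μ.map (fun ω ↦ (X ω, Y ω)) := by
  rw [(indepFun_iff_map_prod_eq_prod_map_map hid.aemeasurable_snd hid.aemeasurable_fst).mp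
      hind.symm,
    (indepFun_iff_map_prod_eq_prod_map_map hid.aemeasurable_fst hid.aemeasurable_snd).mp hind,
    hid.map_eq]

variable [LinearOrder α] [TopologicalSpace α] [OrderClosedTopology α] [SecondCountableTopology α]
  [OpensMeasurableSpace α]

theorem ProbabilityTheory.IndepFun.measure_setOf_le_comm_of_identDistrib [IsFiniteMeasure μ]
    (hind : IndepFun X Y μ) (hid : IdentDistrib X Y μ μ) :
    μ {ω | Y ω ≤ X ω} = μ {ω | X ω ≤ Y ω} := by
  have hmap (U V : Ω → α) (hU : AEMeasurable U μ) (hV : AEMeasurable V μ) :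
      μ {ω | U ω ≤ V ω} = μ.map (fun ω ↦ (U ω, V ω)) {p | p.1 ≤ p.2} :=
    (Measure.map_apply_of_aemeasurable (hU.prodMk hV) measurableSet_le').symm
  rw [hmap Y X hid.aemeasurable_snd hid.aemeasurable_fst,
    hmap X Y hid.aemeasurable_fst hid.aemeasurable_snd,
    hind.map_prodMk_swap_eq_of_identDistrib hid]

theorem ProbabilityTheory.IndepFun.measure_setOf_le_pos_of_identDistrib [IsFiniteMeasure μ]
    [NeZero μ]     (hind : IndepFun X Y μ) (hid : IdentDistrib X Y μ μ) :
    0 < μ {ω | X ω ≤ Y ω} := by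
  have hcover : μ Set.univ ≤ μ {ω | X ω ≤ Y ω} + μ {ω | Y ω ≤ X ω} :=
    (measure_mono fun ω _ ↦ le_total (X ω) (Y ω)).trans (measure_union_le _ _)
  rw [hind.measure_setOf_le_comm_of_identDistrib hid, ← two_mul] at hcover
  refine pos_iff_ne_zero.mpr fun h0 ↦ NeZero.ne μ (Measure.measure_univ_eq_zero.mp ?_)
  rw [h0, mul_zero] at hcover
  exact le_zero_iff.mp hcover

end Exchangeable

theorem integral_lt_integral_of_ae_le_of_ae_lt_on {Ω : Type*} [MeasurableSpace Ω]
    {μ : Measure Ω} {f g : Ω → ℝ} (hf : Integrable f μ) (hg : Integrable g μ)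
    (hle : f ≤ᵐ[μ] g) {s : Set Ω} (hs : 0 < μ s) (hlt : ∀ᵐ ω ∂μ, ω ∈ s → f ω < g ω) :
    ∫ ω, f ω ∂μ < ∫ ω, g ω ∂μ := by
  have hsupp : s ≤ᵐ[μ] Function.support (g - f) := by
    filter_upwards [hlt] with ω hω hs
    exact (sub_pos.mpr (hω hs)).ne'
  have hpos : 0 < ∫ ω, (g - f) ω ∂μ :=
    (integral_pos_iff_support_of_nonneg_ae (hle.mono fun _ h ↦ sub_nonneg.mpr h) (hg.sub hf)).mpr
      (hs.trans_le (measure_mono_ae hsupp))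
  rw [integral_sub' hg hf] at hpos
  linarith

theorem min_one_mul_le_min_one_mul {a b z : ℝ} (hab : a ≤ b) (hz : 0 ≤ z) :
    min 1 (a * z) ≤ min 1 (b * z) :=
  min_le_min_left 1 (mul_le_mul_of_nonneg_right hab hz)

theorem min_one_mul_lt_min_one_mul {a b z : ℝ} (hab : a < b) (hz : 0 < z) (ha : a * z < 1) :
    min 1 (a * z) < min 1 (b * z) := by
  rw [min_eq_right ha.le]
  exact lt_min ha (mul_lt_mul_of_pos_right hab hz)

theorem integrable_min_one_mul {Ω : Type*} [MeasurableSpace Ω] {μ : Measure Ω}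
    [IsFiniteMeasure μ] {Z : Ω → ℝ} (hZ : Measurable Z) (hZpos : ∀ᵐ ω ∂μ, 0 ≤ Z ω) {c : ℝ}
    (hc : 0 ≤ c) : Integrable (fun ω ↦ min 1 (c * Z ω)) μ := by
  refine .of_bound (measurable_const.min (hZ.const_mul c)).aestronglyMeasurable 1 ?_
  filter_upwards [hZpos] with ω hω
  rw [Real.norm_of_nonneg (le_min zero_le_one (mul_nonneg hc hω))]
  exact min_le_left _ _

/-- Let `W₁` and `W₂` be i.i.d. strictly positive random variables and
`Z = W₁/W₂`.  Then for every finite `k > 1`,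
`E[min{1, kZ}] > E[min{1, k⁻¹ Z}]`. -/
theorem symmetric_ratio_acceptance_comparison
    {Ω : Type*} [MeasurableSpace Ω] (μ : Measure Ω) [IsProbabilityMeasure μ]
    (W₁ W₂ : Ω → ℝ) (h₁ : Measurable W₁) (h₂ : Measurable W₂)
    (hindep : IndepFun W₁ W₂ μ)
    (hident : IdentDistrib W₁ W₂ μ μ)
    (hpos₁ : ∀ᵐ ω ∂μ, 0 < W₁ ω) (hpos₂ : ∀ᵐ ω ∂μ, 0 < W₂ ω)
    (k : ℝ) (hk : 1 < k) :
    ∫ ω, min 1 (k⁻¹ * (W₁ ω / W₂ ω)) ∂μ < ∫ ω, min 1 (k * (W₁ ω / W₂ ω)) ∂μ := by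
  have hk₀ : 0 < k := one_pos.trans hk
  have hkinv : k⁻¹ < k := (inv_lt_one_of_one_lt₀ hk).trans hk
  have hZpos : ∀ᵐ ω ∂μ, 0 < W₁ ω / W₂ ω := by
    filter_upwards [hpos₁, hpos₂] with ω hω₁ hω₂ using div_pos hω₁ hω₂
  refine integral_lt_integral_of_ae_le_of_ae_lt_on
    (integrable_min_one_mul (h₁.div h₂) (hZpos.mono fun _ ↦ le_of_lt) (inv_pos.mpr hk₀).le)
    (integrable_min_one_mul (h₁.div h₂) (hZpos.mono fun _ ↦ le_of_lt) hk₀.le)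
    (hZpos.mono fun ω hω ↦ min_one_mul_le_min_one_mul hkinv.le hω.le)
    (hindep.measure_setOf_le_pos_of_identDistrib hident) ?_
  filter_upwards [hpos₂, hZpos] with ω hω₂ hω hle
  refine min_one_mul_lt_min_one_mul hkinv hω ?_
  calc k⁻¹ * (W₁ ω / W₂ ω) ≤ k⁻¹ * 1 := by gcongr; exact (div_le_one hω₂).mpr hle
    _ < 1 := by rw [mul_one]; exact inv_lt_one_of_one_lt₀ hk
end

section
/- Let ε ∈ (0, 2−√3), θ = (1−ε+ε²)/(1−ε+3ε²), b = 2εθ/(1−θ) and s = ε (so that s = (1−ε)/(b−ε)). Let W₁, W₂ be i.i.d. random variables distributed as (b−ε)·B + ε where B is Bernoulli with parameter s (so E[W_i] = 1). Then θ · E[min{1, ((1−θ)/(2θ)) · W₁/W₂}] > 1 − θ. (Consequently, for the geometric target π(m) = (1/2)^m on ℕ⁺ and simple random walk proposal with up-probability θ, every up-transition probability of the noisy chain exceeds every down-transition probability, and the noisy chain with N = 1 is transient.) -/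
open MeasureTheory ProbabilityTheory

/-!
Put `c = (1 - θ) / (2θ)`; the choice of `θ` makes `c = ε² / (1 - ε + ε²)` and `b = ε / c`, so
`c W₁ / W₂` takes the values `c, c², 1, c` on `(ε,ε), (ε,b), (b,ε), (b,b)`. Hence
`E[min 1 (c W₁ / W₂)] = c + ε(1 - ε)(1 - c)²`, and since `1 - θ = 2θc` the claim reduces to
`c < ε(1 - ε)(1 - c)²`, i.e. to `ε(1 - ε + ε²) < (1 - ε)³`. The difference of the two sides is
`(1 - 4ε + ε²) + ε²(3 - 2ε)`, and `2 - √3` is the smaller root of `1 - 4ε + ε²`.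
-/

namespace ProbabilityTheory

variable {Ω α β E : Type*} [MeasurableSpace Ω] {μ : Measure Ω}
  [MeasurableSpace α] [MeasurableSpace β]

theorem IndepFun.measureReal_inter_preimage_eq_mul {X : Ω → α} {Y : Ω → β}
    (hXY : IndepFun X Y μ) {s : Set α} {t : Set β} (hs : MeasurableSet s) (ht : MeasurableSet t) :
    μ.real (X ⁻¹' s ∩ Y ⁻¹' t) = μ.real (X ⁻¹' s) * μ.real (Y ⁻¹' t) := by
  simp only [measureReal_def, hXY.measure_inter_preimage_eq_mul s t hs ht, ENNReal.toReal_mul]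

variable [MeasurableSingletonClass α] [NormedAddCommGroup E] [NormedSpace ℝ E] [CompleteSpace E]

theorem IndepFun.integral_comp_eq_sum_of_mem_finset [IsFiniteMeasure μ]
    [MeasurableSingletonClass β] {X : Ω → α} {Y : Ω → β}
    (hX : Measurable X) (hY : Measurable Y) (hXY : IndepFun X Y μ) {s : Finset α} {t : Finset β}
    (hs : ∀ ω, X ω ∈ s) (ht : ∀ ω, Y ω ∈ t) (f : α → β → E) :
    ∫ ω, f (X ω) (Y ω) ∂μ =
      ∑ i ∈ s, ∑ j ∈ t, (μ.real (X ⁻¹' {i}) * μ.real (Y ⁻¹' {j})) • f i j := by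
  classical
  have hmeas (i : α) (j : β) : MeasurableSet (X ⁻¹' {i} ∩ Y ⁻¹' {j}) :=
    (hX (measurableSet_singleton i)).inter (hY (measurableSet_singleton j))
  have hsum (ω : Ω) : f (X ω) (Y ω) =
      ∑ i ∈ s, ∑ j ∈ t, (X ⁻¹' {i} ∩ Y ⁻¹' {j}).indicator (fun _ ↦ f i j) ω := by
    simp only [Set.indicator_apply, Set.mem_inter_iff, Set.mem_preimage, Set.mem_singleton_iff,
      ite_and, eq_comm (a := X ω), eq_comm (a := Y ω)]
    simp [hs ω, ht ω]
  simp_rw [hsum]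
  rw [integral_finsetSum _ fun i _ ↦
    integrable_finsetSum _ fun j _ ↦ (integrable_const _).indicator (hmeas i j)]
  refine Finset.sum_congr rfl fun i _ ↦ ?_
  rw [integral_finsetSum _ fun j _ ↦ (integrable_const _).indicator (hmeas i j)]
  refine Finset.sum_congr rfl fun j _ ↦ ?_
  rw [integral_indicator_const _ (hmeas i j), hXY.measureReal_inter_preimage_eq_mul
    (measurableSet_singleton i) (measurableSet_singleton j)]

theorem IndepFun.integral_comp_of_mem_pair [IsProbabilityMeasure μ] {X Y : Ω → α}
    (hX : Measurable X) (hY : Measurable Y) (hXY : IndepFun X Y μ) {x y : α} (hxy : x ≠ y)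
    (hXval : ∀ ω, X ω = x ∨ X ω = y) (hYval : ∀ ω, Y ω = x ∨ Y ω = y) (f : α → α → E) :
    ∫ ω, f (X ω) (Y ω) ∂μ =
      ((1 - μ.real (X ⁻¹' {y})) * (1 - μ.real (Y ⁻¹' {y}))) • f x x
        + ((1 - μ.real (X ⁻¹' {y})) * μ.real (Y ⁻¹' {y})) • f x y
        + (μ.real (X ⁻¹' {y}) * (1 - μ.real (Y ⁻¹' {y}))) • f y x
        + (μ.real (X ⁻¹' {y}) * μ.real (Y ⁻¹' {y})) • f y y := by
  classical
  have hcompl {Z : Ω → α} (hZ : Measurable Z) (hZval : ∀ ω, Z ω = x ∨ Z ω = y) :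
      μ.real (Z ⁻¹' {x}) = 1 - μ.real (Z ⁻¹' {y}) := by
    have : Z ⁻¹' {x} = (Z ⁻¹' {y})ᶜ := by
      ext ω; rcases hZval ω with h | h <;> simp [h, hxy, hxy.symm]
    rw [this, probReal_compl_eq_one_sub (hZ (measurableSet_singleton y))]
  rw [hXY.integral_comp_eq_sum_of_mem_finset hX hY (s := {x, y}) (t := {x, y})
    (by simpa using hXval) (by simpa using hYval), Finset.sum_pair hxy, Finset.sum_pair hxy,
    Finset.sum_pair hxy, hcompl hX hXval, hcompl hY hYval, ← add_assoc]

end ProbabilityTheory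

theorem one_sub_four_mul_add_sq_pos_of_lt_two_sub_sqrt_three {ε : ℝ} (hε : ε < 2 - √3) :
    0 < 1 - 4 * ε + ε ^ 2 := by
  have h3 : √3 ^ 2 = 3 := Real.sq_sqrt (by norm_num)
  nlinarith [Real.sqrt_nonneg 3]

theorem lt_one_of_lt_two_sub_sqrt_three {ε : ℝ} (hε : ε < 2 - √3) : ε < 1 := by
  nlinarith [Real.sqrt_nonneg 3, one_sub_four_mul_add_sq_pos_of_lt_two_sub_sqrt_three hε]

theorem lt_mul_one_sub_mul_one_sub_sq {ε c : ℝ} (hε0 : 0 < ε) (hε : ε < 2 - √3)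
    (hc : c = ε ^ 2 / (1 - ε + ε ^ 2)) : c < ε * (1 - ε) * (1 - c) ^ 2 := by
  have hN : 0 < 1 - ε + ε ^ 2 := by nlinarith
  have hcubic : ε * (1 - ε + ε ^ 2) < (1 - ε) ^ 3 := by
    have hroot := one_sub_four_mul_add_sq_pos_of_lt_two_sub_sqrt_three hε
    have hε1 := lt_one_of_lt_two_sub_sqrt_three hε
    nlinarith [mul_pos (pow_pos hε0 2) (by linarith : (0 : ℝ) < 3 - 2 * ε)]
  have h1c : 1 - c = (1 - ε) / (1 - ε + ε ^ 2) := by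
    rw [hc]; field_simp; ring
  rw [h1c, hc, div_pow, mul_div_assoc', div_lt_div_iff₀ hN (by positivity)]
  nlinarith [mul_pos hε0 hN]

theorem one_sub_div_two_mul_eq_sq_div {ε θ : ℝ}
    (hθ : θ = (1 - ε + ε ^ 2) / (1 - ε + 3 * ε ^ 2)) :
    (1 - θ) / (2 * θ) = ε ^ 2 / (1 - ε + ε ^ 2) := by
  have hN : 0 < 1 - ε + ε ^ 2 := by nlinarith [sq_nonneg (ε - 1)]
  -- kept opaque: `field_simp` would rewrite `3 * ε ^ 2` and no longer see `hD`
  set D := 1 - ε + 3 * ε ^ 2 with hD_def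
  have hD : 0 < D := by nlinarith [sq_nonneg (ε - 1)]
  rw [hθ]
  field_simp
  rw [hD_def]
  ring

/-- Let `ε ∈ (0, 2-√3)`, `θ = (1-ε+ε²)/(1-ε+3ε²)`, `b = 2εθ/(1-θ)` and
`s = ε`.  Let `W₁, W₂` be i.i.d. random variables distributed as `(b-ε)·B + ε` with `B`
Bernoulli of parameter `s`.  Then `θ · E[min{1, ((1-θ)/(2θ)) W₁/W₂}] > 1 - θ`. -/
theorem transient_example_up_probability_dominates
    {Ω : Type*} [MeasurableSpace Ω] (μ : Measure Ω) [IsProbabilityMeasure μ]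
    (ε θ b s : ℝ) (hε0 : 0 < ε) (hε1 : ε < 2 - Real.sqrt 3)
    (hθ : θ = (1 - ε + ε ^ 2) / (1 - ε + 3 * ε ^ 2))
    (hb : b = 2 * ε * θ / (1 - θ))
    (hs : s = ε)
    (W₁ W₂ : Ω → ℝ) (h₁ : Measurable W₁) (h₂ : Measurable W₂)
    (hindep : IndepFun W₁ W₂ μ)
    (hval₁ : ∀ ω, W₁ ω = ε ∨ W₁ ω = b) (hval₂ : ∀ ω, W₂ ω = ε ∨ W₂ ω = b)
    (hp₁ : μ {ω | W₁ ω = b} = ENNReal.ofReal s)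
    (hp₂ : μ {ω | W₂ ω = b} = ENNReal.ofReal s) :
    1 - θ < θ * ∫ ω, min 1 ((1 - θ) / (2 * θ) * (W₁ ω / W₂ ω)) ∂μ := by
  have hε1' := lt_one_of_lt_two_sub_sqrt_three hε1
  have hN : 0 < 1 - ε + ε ^ 2 := by nlinarith
  have hD : 0 < 1 - ε + 3 * ε ^ 2 := by nlinarith
  have hθ0 : 0 < θ := hθ ▸ div_pos hN hD
  set c := (1 - θ) / (2 * θ) with hc_def
  have hc : c = ε ^ 2 / (1 - ε + ε ^ 2) := one_sub_div_two_mul_eq_sq_div hθ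
  have hc0 : 0 < c := by rw [hc]; positivity
  have hc1 : c < 1 := by rw [hc, div_lt_one hN]; linarith
  have hbc : b = ε / c := by
    rw [hb, hc_def]; field_simp
  have hεb : ε < b := by rw [hbc, lt_div_iff₀ hc0]; nlinarith
  rw [hindep.integral_comp_of_mem_pair h₁ h₂ hεb.ne hval₁ hval₂ fun u v ↦ min 1 (c * (u / v))]
  simp only [Set.preimage, Set.mem_singleton_iff, measureReal_def, hp₁, hp₂, hs,
    ENNReal.toReal_ofReal hε0.le, smul_eq_mul]
  have hvals : c * (ε / ε) = c ∧ c * (ε / b) = c ^ 2 ∧ c * (b / ε) = 1 ∧ c * (b / b) = c := by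
    rw [hbc]; field_simp; simp
  rw [hvals.1, hvals.2.1, hvals.2.2.1, hvals.2.2.2, min_self, min_eq_right hc1.le,
    min_eq_right (by nlinarith)]
  have hgap := lt_mul_one_sub_mul_one_sub_sq hε0 hε1 hc
  have hθc : 1 - θ = θ * (2 * c) := by rw [hc_def]; field_simp
  rw [hθc]
  exact mul_lt_mul_of_pos_left (by linear_combination hgap) hθ0
end

section
/- Let R > 0, τ ∈ (0,1) and r > 0 satisfy log(2Rr·log(1/τ)) ≥ 1, and let d ≥ 0 be a real number such that d ≤ 2Rτⁿ + n/r for every positive integer n. Then d ≤ (1/r)·(1 + (τ + log(2Rr·log(1/τ)))/log(1/τ)). -/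
/-! Choose `n = ⌈A / L⌉` with `L = log τ⁻¹` and `A = log (K L)`, `K = 2 R r`, so that
`K τⁿ = τ^s / L` for the rounding error `s = n - A / L ∈ [0, 1]`. Bounding `τ^s` by the chord
`1 - s + s τ` and `1 - τ` by `L` bounds `2 R τⁿ + n / r`, hence `d`, by the claimed quantity. -/

open Real

lemma Real.rpow_le_one_sub_add_mul {x s : ℝ} (hx : 0 ≤ x) (hs0 : 0 ≤ s) (hs1 : s ≤ 1) :
    x ^ s ≤ 1 - s + s * x := by
  simpa using geom_mean_le_arith_mean2_weighted (sub_nonneg.2 hs1) hs0 zero_le_one hx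
    (sub_add_cancel 1 s)

lemma Real.rpow_div_log_inv {τ : ℝ} (hτ : 0 < τ) (hL : log τ⁻¹ ≠ 0) (A : ℝ) :
    τ ^ (A / log τ⁻¹) = exp (-A) := by
  rw [log_inv, neg_ne_zero] at hL
  rw [rpow_def_of_pos hτ, log_inv]
  congr 1
  field_simp

lemma exists_pos_nat_mul_pow_add_le {τ K : ℝ} (hτ0 : 0 < τ) (hτ1 : τ < 1) (hK : 0 < K)
    (hA : 0 < log (K * log τ⁻¹)) :
    ∃ n : ℕ, 0 < n ∧ K * τ ^ n + n ≤ 1 + (τ + log (K * log τ⁻¹)) / log τ⁻¹ := by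
  set L := log τ⁻¹
  set A := log (K * L)
  have hL : 0 < L := log_pos (one_lt_inv_iff₀.2 ⟨hτ0, hτ1⟩)
  have hAL : 0 < A / L := div_pos hA hL
  refine ⟨⌈A / L⌉₊, Nat.ceil_pos.2 hAL, ?_⟩
  set s := (⌈A / L⌉₊ : ℝ) - A / L
  have hn : (⌈A / L⌉₊ : ℝ) = A / L + s := by ring
  have hs0 : 0 ≤ s := sub_nonneg.2 (Nat.le_ceil _)
  have hs1 : s ≤ 1 := by linarith [Nat.ceil_lt_add_one hAL.le]
  have hKτn : K * τ ^ ⌈A / L⌉₊ = τ ^ s / L := by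
    rw [← rpow_natCast, hn, rpow_add hτ0, rpow_div_log_inv hτ0 hL.ne', exp_neg,
      exp_log (by positivity)]
    field_simp
  have hL1 : 1 - τ ≤ L := by
    simpa only [inv_inv] using one_sub_inv_le_log_of_pos (inv_pos.2 hτ0)
  rw [hKτn, hn]
  calc τ ^ s / L + (A / L + s) ≤ (1 - s + s * τ) / L + (A / L + s) := by
        gcongr
        exact rpow_le_one_sub_add_mul hτ0.le hs0 hs1
    _ = 1 + (τ + A) / L - (1 - s) * (L - (1 - τ)) / L := by field_simp; ring
    _ ≤ 1 + (τ + A) / L :=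
        sub_le_self _ (div_nonneg (mul_nonneg (by linarith) (by linarith)) hL.le)

theorem rate_optimisation_bound_general
    (R τ r d : ℝ) (hR : 0 < R) (hτ0 : 0 < τ) (hτ1 : τ < 1) (hr : 0 < r)
    (hlog : 1 ≤ Real.log (2 * R * r * Real.log τ⁻¹))
    (hd : ∀ n : ℕ, 0 < n → d ≤ 2 * R * τ ^ n + n / r) :
    d ≤ (1 / r) * (1 + (τ + Real.log (2 * R * r * Real.log τ⁻¹)) / Real.log τ⁻¹) := by
  obtain ⟨n, hn, hle⟩ :=
    exists_pos_nat_mul_pow_add_le hτ0 hτ1 (by positivity : 0 < 2 * R * r) (by linarith)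
  calc d ≤ 2 * R * τ ^ n + n / r := hd n hn
    _ = (1 / r) * (2 * R * r * τ ^ n + n) := by field_simp
    _ ≤ _ := by gcongr

/-- Let `R > 0`, `τ ∈ (0,1)` and `r > 0` satisfy
`log(2Rr·log(1/τ)) ≥ 1`, and let `d ≥ 0` satisfy `d ≤ 2Rτⁿ + n/r` for every positive
integer `n`.  Then `d ≤ (1/r)(1 + (τ + log(2Rr·log(1/τ)))/log(1/τ))`. -/
theorem rate_optimisation_bound
    (R τ r d : ℝ) (hR : 0 < R) (hτ0 : 0 < τ) (hτ1 : τ < 1) (hr : 0 < r)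
    (hlog : 1 ≤ Real.log (2 * R * r * Real.log τ⁻¹))
    (hd0 : 0 ≤ d)
    (hd : ∀ n : ℕ, 0 < n → d ≤ 2 * R * τ ^ n + n / r) :
    d ≤ (1 / r) * (1 + (τ + Real.log (2 * R * r * Real.log τ⁻¹)) / Real.log τ⁻¹) :=
  rate_optimisation_bound_general R τ r d hR hτ0 hτ1 hr hlog hd
end
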